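/- arXiv:1710.02119 — 2 statements merged into one kernel-verified Lean document; each statement's English description precedes it below -/
import Mathlib

section
/- Let Q̄ = (Q, I) be a gentle quiver with relations over an algebraically closed field k and let J be a subset of the vertices of Q̄, with e_J the sum of the primitive idempotents of kQ/I corresponding to the vertices in J. Then the quotient kQ_J/I_J of the path algebra of the shortcut quiver Q̄_J = (Q_J, I_J) is a gentle algebra, and it is isomorphic as a k-algebra to the corner algebra e_J (kQ/I) e_J. -/
open scoped Classical

/-- A quiver with relations: a set of vertices, a set of arrows with source and target maps,
and a set of relations, each relation being a pair of consecutive arrows (the first component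
being traversed first). -/
structure QuivRel where
  V : Type
  E : Type
  src : E → V
  tgt : E → V
  rel : Set (E × E)

namespace QuivRel

variable (G : QuivRel)

/-- Paths in a quiver with relations. -/
inductive PathG : G.V → G.V → Type
  | nil (a : G.V) : PathG a a
  | cons {a b c : G.V} (p : PathG a b) (e : G.E) (h₁ : G.src e = b) (h₂ : G.tgt e = c) :
      PathG a c

namespace PathG

variable {G}

/-- The length of a path. -/
def length : {a b : G.V} → PathG G a b → ℕ
  | _, _, .nil _ => 0
  | _, _, .cons p _ _ _ => p.length + 1

/-- The list of arrows traversed by a path, in order. -/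
def arrows : {a b : G.V} → PathG G a b → List G.E
  | _, _, .nil _ => []
  | _, _, .cons p e _ _ => p.arrows ++ [e]

/-- The internal vertices of a path (all visited vertices except the two endpoints). -/
def mids : {a b : G.V} → PathG G a b → List G.V
  | _, _, .nil _ => []
  | _, _, @cons _ _ b _ p _ _ _ => p.mids ++ (if p.length = 0 then [] else [b])

/-- Concatenation of paths. -/
def concat : {a b c : G.V} → PathG G a b → PathG G b c → PathG G a c
  | _, _, _, p, .nil _ => p
  | _, _, _, p, .cons q e h₁ h₂ => .cons (p.concat q) e h₁ h₂

end PathG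

/-- A path contains (i.e., factors through) a relation of `G`. -/
def HasRel {a b : G.V} (p : PathG G a b) : Prop :=
  ∃ (l₁ : List G.E) (x y : G.E) (l₂ : List G.E),
    p.arrows = l₁ ++ x :: y :: l₂ ∧ (x, y) ∈ G.rel

/-- The gentleness conditions of Butler–Ringel for a quiver with relations. -/
def IsGentle : Prop :=
  (∀ r ∈ G.rel, G.tgt r.1 = G.src r.2) ∧
  (∀ v : G.V, {e : G.E | G.src e = v}.Subsingleton ∨
    ∃ e₁ e₂, e₁ ≠ e₂ ∧ {e : G.E | G.src e = v} = {e₁, e₂}) ∧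
  (∀ v : G.V, {e : G.E | G.tgt e = v}.Subsingleton ∨
    ∃ e₁ e₂, e₁ ≠ e₂ ∧ {e : G.E | G.tgt e = v} = {e₁, e₂}) ∧
  (∀ a b c : G.E, G.tgt a = G.src b → G.tgt a = G.src c →
    (a, b) ∉ G.rel → (a, c) ∉ G.rel → b = c) ∧
  (∀ a b c : G.E, G.tgt a = G.src b → G.tgt a = G.src c →
    (a, b) ∈ G.rel → (a, c) ∈ G.rel → b = c) ∧
  (∀ a b c : G.E, G.tgt a = G.src c → G.tgt b = G.src c →
    (a, c) ∉ G.rel → (b, c) ∉ G.rel → a = b) ∧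
  (∀ a b c : G.E, G.tgt a = G.src c → G.tgt b = G.src c →
    (a, c) ∈ G.rel → (b, c) ∈ G.rel → a = b)

/-- The shortcut quiver with relations `G_J`: its vertices are the elements of `J`, its arrows
are the relation-free paths of `G` with endpoints in `J` and no internal vertex in `J`, and its
relations are the pairs of composable such paths whose concatenation contains a relation
of `G`. -/
def shortcut (J : Set G.V) : QuivRel where
  V := J
  E := Σ (a : J) (b : J),
    {p : PathG G a.1 b.1 // 0 < p.length ∧ (∀ v ∈ p.mids, v ∉ J) ∧ ¬ G.HasRel p}
  src := fun x => x.1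
  tgt := fun x => x.2.1
  rel := {y | ∃ h : y.1.2.1 = y.2.1,
    G.HasRel ((congrArg Subtype.val h ▸ y.1.2.2.1 : PathG G y.1.1.1 y.2.1.1).concat y.2.2.2.1)}

/-- Isomorphism of quivers with relations. -/
def Iso (G H : QuivRel) : Prop :=
  ∃ (fV : G.V ≃ H.V) (fE : G.E ≃ H.E),
    (∀ e, H.src (fE e) = fV (G.src e)) ∧ (∀ e, H.tgt (fE e) = fV (G.tgt e)) ∧
    (∀ a b : G.E, (a, b) ∈ G.rel ↔ (fE a, fE b) ∈ H.rel)

end QuivRel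

section PathAlg

variable (k : Type) [CommRing k]

namespace QuivRel

/-- The defining relations of the path algebra of a quiver with relations `G` over `k`, as
relations on the free algebra on the vertices and arrows of `G`: the vertices become a complete
family of orthogonal idempotents, the arrows are composable according to their sources and
targets, and the relations of `G` become zero. -/
inductive PARel (G : QuivRel) [Fintype G.V] :
    FreeAlgebra k (G.V ⊕ G.E) → FreeAlgebra k (G.V ⊕ G.E) → Prop
  | vmul (v w : G.V) : PARel G (FreeAlgebra.ι k (Sum.inl v) * FreeAlgebra.ι k (Sum.inl w))
      (if v = w then FreeAlgebra.ι k (Sum.inl v) else 0)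
  | vsum : PARel G (∑ v : G.V, FreeAlgebra.ι k (Sum.inl v)) 1
  | etgt (e : G.E) : PARel G
      (FreeAlgebra.ι k (Sum.inl (G.tgt e)) * FreeAlgebra.ι k (Sum.inr e))
      (FreeAlgebra.ι k (Sum.inr e))
  | esrc (e : G.E) : PARel G
      (FreeAlgebra.ι k (Sum.inr e) * FreeAlgebra.ι k (Sum.inl (G.src e)))
      (FreeAlgebra.ι k (Sum.inr e))
  | zrel (a b : G.E) (h : (a, b) ∈ G.rel) : PARel G
      (FreeAlgebra.ι k (Sum.inr b) * FreeAlgebra.ι k (Sum.inr a)) 0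

/-- The path algebra with relations `kG = kQ/I` of a quiver with relations `G` over `k`. -/
abbrev Alg (G : QuivRel) [Fintype G.V] : Type := RingQuot (PARel k G)

/-- The idempotent of the path algebra attached to a vertex (the lazy path at this vertex). -/
noncomputable def vtx (G : QuivRel) [Fintype G.V] (v : G.V) : Alg k G :=
  RingQuot.mkRingHom (PARel k G) (FreeAlgebra.ι k (Sum.inl v))

theorem vtx_mul (G : QuivRel) [Fintype G.V] (v w : G.V) :
    vtx k G v * vtx k G w = if v = w then vtx k G v else 0 := by
  have h := RingQuot.mkRingHom_rel (PARel.vmul (k := k) v w)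
  rw [map_mul] at h
  unfold vtx
  rw [h]
  split <;> simp

/-- The sum of the vertex idempotents of the path algebra attached to a subset `J` of the
vertices. -/
noncomputable def vtxSum (G : QuivRel) [Fintype G.V] (J : Set G.V) [Fintype J] : Alg k G :=
  ∑ j : J, vtx k G j.1

theorem vtxSum_idem (G : QuivRel) [Fintype G.V] (J : Set G.V) [Fintype J] :
    vtxSum k G J * vtxSum k G J = vtxSum k G J := by
  unfold vtxSum
  rw [Finset.sum_mul_sum]
  apply Finset.sum_congr rfl
  intro i _
  rw [Finset.sum_eq_single i (fun j _ hj => by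
      rw [vtx_mul, if_neg (fun hh => hj (Subtype.ext hh.symm))])
    (fun h => (h (Finset.mem_univ i)).elim), vtx_mul, if_pos rfl]

end QuivRel

end PathAlg
/-- The corner ring `eRe` of an idempotent `e`. -/
def Corner {R : Type} [Ring R] (e : R) (_he : e * e = e) : Type :=
  {x : R // e * x = x ∧ x * e = x}

namespace Corner

variable {R : Type} [Ring R] (e : R) (he : e * e = e)

instance : Add (Corner e he) := ⟨fun x y => ⟨x.1 + y.1, by
  constructor
  · rw [mul_add, x.2.1, y.2.1]
  · rw [add_mul, x.2.2, y.2.2]⟩⟩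
instance : Neg (Corner e he) := ⟨fun x => ⟨-x.1, by
  constructor
  · rw [mul_neg, x.2.1]
  · rw [neg_mul, x.2.2]⟩⟩
instance : Zero (Corner e he) := ⟨⟨0, by simp⟩⟩
instance : One (Corner e he) := ⟨⟨e, he, he⟩⟩
instance : Mul (Corner e he) := ⟨fun x y => ⟨x.1 * y.1, by
  constructor
  · rw [← mul_assoc, x.2.1]
  · rw [mul_assoc, y.2.2]⟩⟩

instance instRing : Ring (Corner e he) where
  add_assoc a b c := Subtype.ext (add_assoc _ _ _)
  zero_add a := Subtype.ext (zero_add _)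
  add_zero a := Subtype.ext (add_zero _)
  add_comm a b := Subtype.ext (add_comm _ _)
  neg_add_cancel a := Subtype.ext (neg_add_cancel _)
  mul_assoc a b c := Subtype.ext (mul_assoc _ _ _)
  one_mul a := Subtype.ext a.2.1
  mul_one a := Subtype.ext a.2.2
  left_distrib a b c := Subtype.ext (left_distrib _ _ _)
  right_distrib a b c := Subtype.ext (right_distrib _ _ _)
  zero_mul a := Subtype.ext (zero_mul _)
  mul_zero a := Subtype.ext (mul_zero _)
  nsmul := nsmulRec
  zsmul := zsmulRec

variable (k : Type) [CommRing k] [Algebra k R]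

theorem hce (c : k) : e * algebraMap k R c = algebraMap k R c * e := (Algebra.commutes c e).symm

noncomputable instance instAlgebra : Algebra k (Corner e he) where
  algebraMap := {
    toFun c := ⟨algebraMap k R c * e, by
      constructor
      · rw [← mul_assoc, hce, mul_assoc, he]
      · rw [mul_assoc, he]⟩
    map_one' := Subtype.ext (by show algebraMap k R 1 * e = e; rw [map_one, one_mul])
    map_mul' a b := Subtype.ext (by
      show algebraMap k R (a * b) * e = (algebraMap k R a * e) * (algebraMap k R b * e)
      rw [map_mul, mul_assoc]
      conv_rhs => rw [mul_assoc, ← mul_assoc e, hce, mul_assoc, he])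
    map_zero' := Subtype.ext (by show algebraMap k R 0 * e = 0; rw [map_zero, zero_mul])
    map_add' a b := Subtype.ext (by
      show algebraMap k R (a + b) * e = algebraMap k R a * e + algebraMap k R b * e
      rw [map_add, add_mul]) }
  commutes' c x := Subtype.ext (by
    show (algebraMap k R c * e) * x.1 = x.1 * (algebraMap k R c * e)
    rw [mul_assoc, x.2.1, Algebra.commutes c x.1]
    conv_rhs => rw [← hce, ← mul_assoc, x.2.2])
  smul c x := ⟨c • x.1, by
    constructor
    · rw [mul_smul_comm, x.2.1]
    · rw [smul_mul_assoc, x.2.2]⟩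
  smul_def' c x := Subtype.ext (by
    show c • x.1 = (algebraMap k R c * e) * x.1
    rw [mul_assoc, x.2.1, Algebra.smul_def])

end Corner


instance (G : QuivRel) (J : Set G.V) [Fintype J] : Fintype (G.shortcut J).V :=
  inferInstanceAs (Fintype J)

/-!
A shortcut arrow is a relation-free path of `G` from `J` to `J` that avoids `J` in between. In a
gentle quiver an arrow has at most one relation-free successor and at most one relation-free
predecessor, so such a path is determined by its first arrow, and also by its last one. Hence
`firstArrow` and `lastArrow` embed the shortcut arrows leaving (entering) a vertex into the arrows
of `G` there, and two shortcut arrows form a relation exactly when the last arrow of the first and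
the first arrow of the second do: every gentleness condition passes from `G` to `G_J`.

Sending vertices to lazy paths and shortcut arrows to their paths gives an algebra map
`toCorner : kQ_J/I_J → e_J (kQ/I) e_J`. It is onto because a path between vertices of `J` is cut
by its visits to `J` into shortcut arrows. For injectivity, `kQ/I` acts on the free
`kQ_J/I_J`-module on *tails*, the relation-free paths from `J` that do not come back to `J` before
their end: arrows extend tails, except that a tail which has come back to `J` is first cut off and
moved into the coefficient as a shortcut arrow. Weighting each tail by its shortcut arrow (or lazy
path) gives `tailEval`, which sends `toCorner z` applied to the sum of the lazy tails back to `z`.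
-/

namespace List

variable {α β : Type*} {R S : α → α → Prop} {P : α → Prop}

theorem IsChain.eq_of_head_eq_of_rightUnique (hR : ∀ a b c, R a b → R a c → b = c) :
    ∀ {l l' : List α} (hl : l ≠ []) (hl' : l' ≠ []), l.IsChain R → l'.IsChain R →
      l.head hl = l'.head hl' → (∀ x ∈ l.dropLast, ¬ P x) → (∀ x ∈ l'.dropLast, ¬ P x) →
      P (l.getLast hl) → P (l'.getLast hl') → l = l'
  | [a], [b], _, _, _, _, hab, _, _, _, _ => by simp_all
  | [a], b :: c :: m, _, _, _, _, hab, _, hP', ha, _ => by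
    simp only [head_cons, getLast_singleton] at hab ha
    exact absurd (hab ▸ ha) (hP' b (by simp))
  | a :: b :: m, [c], _, _, _, _, hac, hP, _, _, hc => by
    simp only [head_cons, getLast_singleton] at hac hc
    exact absurd (hac ▸ hc) (hP a (by simp))
  | a :: b :: m, c :: d :: m', _, _, h, h', hac, hP, hP', hl, hl' => by
    simp only [head_cons] at hac
    subst hac
    have hbd : b = d := hR a b d (isChain_cons_cons.mp h).1 (isChain_cons_cons.mp h').1
    subst hbd
    rw [eq_of_head_eq_of_rightUnique hR (cons_ne_nil b m) (cons_ne_nil b m')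
      (isChain_cons_cons.mp h).2 (isChain_cons_cons.mp h').2 rfl
      (fun x hx => hP x (by simp_all))
      (fun x hx => hP' x (by simp_all))
      (by simpa [getLast_cons] using hl) (by simpa [getLast_cons] using hl')]

theorem IsChain.and {l : List α} (hR : l.IsChain R) (hS : l.IsChain S) :
    l.IsChain (fun a b => R a b ∧ S a b) := by
  rw [isChain_iff_forall_rel_of_append_cons_cons] at *
  exact fun _ _ _ _ h => ⟨hR h, hS h⟩

theorem map_tail_eq_dropLast_map {f g : α → β} :
    ∀ {l : List α}, l.IsChain (fun a b => f a = g b) → l.tail.map g = (l.map f).dropLast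
  | [], _ | [_], _ => rfl
  | a :: b :: l, h => by
    rw [isChain_cons_cons] at h
    have ih := map_tail_eq_dropLast_map h.2
    simp only [tail_cons, map_cons, dropLast_cons_cons] at ih ⊢
    rw [ih, h.1]

end List

namespace Set

theorem encard_le_two_iff {α : Type*} {s : Set α} :
    s.encard ≤ 2 ↔ s.Subsingleton ∨ ∃ x y, x ≠ y ∧ s = {x, y} := by
  rw [← encard_le_one_iff_subsingleton, ← encard_eq_two]
  constructor
  · intro h
    rcases h.lt_or_eq with h | h
    · exact Or.inl (Order.le_of_lt_add_one h)
    · exact Or.inr h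
  · rintro (h | h)
    · exact h.trans (by norm_num)
    · exact h.le

end Set

namespace Corner

variable {R : Type} [Ring R] {e : R}

@[simp] theorem mul_val {he : e * e = e} (x y : Corner e he) : (x * y).1 = x.1 * y.1 := rfl

@[simp] theorem zero_val {he : e * e = e} : (0 : Corner e he).1 = 0 := rfl

theorem val_sum {he : e * e = e} {ι : Type*} (s : Finset ι) (f : ι → Corner e he) :
    (∑ i ∈ s, f i).1 = ∑ i ∈ s, (f i).1 :=
  map_sum (AddMonoidHom.mk' (fun x : Corner e he => x.1) fun _ _ => rfl) f s

variable (k : Type) [CommRing k] [Algebra k R] (he : e * e = e)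

def proj : R →ₗ[k] Corner e he where
  toFun r := ⟨e * r * e, by rw [← mul_assoc, ← mul_assoc, he], by rw [mul_assoc, he]⟩
  map_add' x y := Subtype.ext (by simp only [mul_add, add_mul]; rfl)
  map_smul' c x := Subtype.ext (by simp only [mul_smul_comm, smul_mul_assoc]; rfl)

@[simp] theorem proj_apply_val (r : R) : (proj k he r).1 = e * r * e := rfl

theorem proj_val (x : Corner e he) : proj k he x.1 = x :=
  Subtype.ext (by rw [proj_apply_val, x.2.1, x.2.2])

end Corner

namespace QuivRel

section Paths

variable {G : QuivRel}

namespace PathG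

@[simp] theorem length_nil (a : G.V) : (nil a : PathG G a a).length = 0 := by
  simp only [length]

@[simp] theorem length_cons {a b c : G.V} (p : PathG G a b) (e : G.E) (h₁ : G.src e = b)
    (h₂ : G.tgt e = c) : (p.cons e h₁ h₂).length = p.length + 1 := by
  simp only [length]

@[simp] theorem arrows_nil (a : G.V) : (nil a : PathG G a a).arrows = [] := by
  simp only [arrows]

@[simp] theorem arrows_cons {a b c : G.V} (p : PathG G a b) (e : G.E) (h₁ : G.src e = b)
    (h₂ : G.tgt e = c) : (p.cons e h₁ h₂).arrows = p.arrows ++ [e] := by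
  simp only [arrows]

@[simp] theorem mids_nil (a : G.V) : (nil a : PathG G a a).mids = [] := by
  simp only [mids]

@[simp] theorem mids_cons {a b c : G.V} (p : PathG G a b) (e : G.E) (h₁ : G.src e = b)
    (h₂ : G.tgt e = c) :
    (p.cons e h₁ h₂).mids = p.mids ++ (if p.length = 0 then [] else [b]) := by
  simp only [mids]

@[simp] theorem concat_nil {a b : G.V} (p : PathG G a b) : p.concat (nil b) = p := by
  simp only [concat]

@[simp] theorem concat_cons {a b c d : G.V} (p : PathG G a b) (q : PathG G b c) (e : G.E)
    (h₁ : G.src e = c) (h₂ : G.tgt e = d) :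
    p.concat (q.cons e h₁ h₂) = (p.concat q).cons e h₁ h₂ := by
  simp only [concat]

@[simp] theorem length_concat {a b c : G.V} (p : PathG G a b) (q : PathG G b c) :
    (p.concat q).length = p.length + q.length := by
  induction q with
  | nil => simp
  | cons q e h₁ h₂ ih => simp [ih, Nat.add_assoc]

@[simp] theorem arrows_concat {a b c : G.V} (p : PathG G a b) (q : PathG G b c) :
    (p.concat q).arrows = p.arrows ++ q.arrows := by
  induction q with
  | nil => simp
  | cons q e h₁ h₂ ih => simp [ih]

@[simp] theorem length_arrows {a b : G.V} (p : PathG G a b) : p.arrows.length = p.length := by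
  induction p with
  | nil => simp
  | cons p e h₁ h₂ ih => simp [ih]

theorem arrows_ne_nil {a b : G.V} {p : PathG G a b} (h : 0 < p.length) : p.arrows ≠ [] := by
  rwa [← List.length_pos_iff_ne_nil, length_arrows]

theorem eq_of_length_eq_zero {a b : G.V} {p : PathG G a b} (h : p.length = 0) : a = b := by
  cases p with
  | nil => rfl
  | cons p e h₁ h₂ => simp at h

theorem tgt_of_mem_getLast? {a b : G.V} {p : PathG G a b} {x : G.E}
    (h : x ∈ p.arrows.getLast?) : G.tgt x = b := by
  cases p with
  | nil => simp at h
  | cons p e h₁ h₂ => simp_all [← h₂]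

theorem src_of_mem_head? {a b : G.V} {p : PathG G a b} {x : G.E}
    (h : x ∈ p.arrows.head?) : G.src x = a := by
  induction p with
  | nil => simp at h
  | cons p e h₁ h₂ ih =>
    rcases hp : p.arrows with _ | ⟨y, l⟩
    · simp only [arrows_cons, hp, List.nil_append, List.head?_cons, Option.mem_def,
        Option.some.injEq] at h
      rw [← h, h₁]
      exact (eq_of_length_eq_zero (by simpa using congrArg List.length hp)).symm
    · exact ih (by simp_all)

theorem isChain_arrows {a b : G.V} (p : PathG G a b) :
    p.arrows.IsChain (fun e f => G.tgt e = G.src f) := by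
  induction p with
  | nil => simp
  | cons p e h₁ h₂ ih =>
    rw [arrows_cons]
    refine ih.append (List.isChain_singleton e) fun x hx y hy => ?_
    simp only [List.head?_cons, Option.mem_def, Option.some.injEq] at hy
    rw [tgt_of_mem_getLast? hx, ← hy, h₁]

theorem mids_eq {a b : G.V} (p : PathG G a b) : p.mids = (p.arrows.map G.tgt).dropLast := by
  induction p with
  | nil => simp
  | cons p e h₁ h₂ ih =>
    rw [arrows_cons, mids_cons, List.map_append, List.map_singleton, List.dropLast_concat, ih]
    split_ifs with h
    · simp [List.length_eq_zero_iff.mp (length_arrows p ▸ h)]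
    · have hne : p.arrows.map G.tgt ≠ [] := by simpa using arrows_ne_nil (Nat.pos_of_ne_zero h)
      conv_rhs => rw [← List.dropLast_append_getLast hne]
      rw [List.getLast_map, tgt_of_mem_getLast? (List.getLast_mem_getLast? _)]

theorem sigma_eq_of_arrows_eq {a b c : G.V} (p : PathG G a b) (q : PathG G a c)
    (h : p.arrows = q.arrows) : (⟨b, p⟩ : Σ x, PathG G a x) = ⟨c, q⟩ := by
  induction p generalizing c with
  | nil => cases q with
    | nil => rfl
    | cons q f g₁ g₂ => simp at h
  | cons p e h₁ h₂ ih => cases q with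
    | nil => simp at h
    | cons q f g₁ g₂ =>
      obtain ⟨hpq, rfl⟩ : p.arrows = q.arrows ∧ e = f := by simpa using h
      obtain ⟨rfl, hpq⟩ := Sigma.mk.inj_iff.mp (ih q hpq)
      cases eq_of_heq hpq
      subst h₂ g₂
      rfl

end PathG

theorem hasRel_iff {a b : G.V} (p : PathG G a b) :
    G.HasRel p ↔ ¬ p.arrows.IsChain (fun x y => (x, y) ∉ G.rel) := by
  rw [List.isChain_iff_forall_rel_of_append_cons_cons, HasRel]
  push Not
  exact ⟨fun ⟨l₁, x, y, l₂, h, hr⟩ => ⟨x, y, l₁, l₂, h, hr⟩,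
    fun ⟨x, y, l₁, l₂, h, hr⟩ => ⟨l₁, x, y, l₂, h, hr⟩⟩

theorem arrows_cast {a b b' : G.V} (h : b = b') (p : PathG G a b) :
    (h ▸ p : PathG G a b').arrows = p.arrows := by
  cases h; rfl

theorem hasRel_cons_iff {a b c : G.V} {p : PathG G a b} {e : G.E}
    {h₁ : G.src e = b} {h₂ : G.tgt e = c} :
    G.HasRel (p.cons e h₁ h₂) ↔ G.HasRel p ∨ ∃ x ∈ p.arrows.getLast?, (x, e) ∈ G.rel := by
  simp [hasRel_iff, List.isChain_append, imp_iff_not_or]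

theorem PathG.exists_eq_cons_concat {a b : G.V} (p : PathG G a b)
    (hp : 0 < p.length) :
    ∃ (f : G.E) (hf : G.src f = a) (rest : PathG G (G.tgt f) b),
      p = ((PathG.nil a).cons f hf rfl).concat rest := by
  induction p with
  | nil => simp at hp
  | cons p g h₁ h₂ ih =>
    subst h₂
    rcases Nat.eq_zero_or_pos p.length with h0 | h0
    · cases p with
      | nil => exact ⟨g, h₁, .nil _, by simp⟩
      | cons => simp at h0
    · obtain ⟨f, hf, rest, rfl⟩ := ih h0
      exact ⟨f, hf, rest.cons g h₁ rfl, by simp⟩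

theorem PathG.exists_eq_concat_of_mem {J : Set G.V} {a b : G.V}
    (p : PathG G a b) (hp : 0 < p.length) (ha : a ∈ J) :
    ∃ m ∈ J, ∃ (q : PathG G a m) (s : PathG G m b),
      p = q.concat s ∧ 0 < s.length ∧ ∀ x ∈ s.mids, x ∉ J := by
  induction p with
  | nil => simp at hp
  | cons p e h₁ h₂ ih =>
    subst h₁ h₂
    rcases Nat.eq_zero_or_pos p.length with h0 | h0
    · cases p with
      | nil => exact ⟨_, ha, .nil _, (PathG.nil _).cons e rfl rfl, by simp, by simp, by simp⟩
      | cons => simp at h0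
    by_cases he : G.src e ∈ J
    · exact ⟨_, he, p, (PathG.nil _).cons e rfl rfl, by simp, by simp, by simp⟩
    obtain ⟨m, hm, q, s, rfl, hs, hsm⟩ := ih h0
    refine ⟨m, hm, q, s.cons e rfl rfl, by simp, by simp, fun x hx => ?_⟩
    simp only [PathG.mids_cons, List.mem_append] at hx
    split_ifs at hx
    · omega
    · simp only [List.mem_singleton] at hx
      rcases hx with hx | rfl
      exacts [hsm x hx, he]

end Paths

section Gentle

variable {G : QuivRel}

def Follows (e f : G.E) : Prop := G.tgt e = G.src f ∧ (e, f) ∉ G.rel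

theorem isChain_follows_arrows {a b : G.V} {p : PathG G a b} (hp : ¬ G.HasRel p) :
    p.arrows.IsChain Follows :=
  p.isChain_arrows.and (not_not.mp (mt (hasRel_iff p).mpr hp))

theorem IsGentle.follows_right_unique (hG : G.IsGentle) {a b c : G.E} (hb : Follows a b)
    (hc : Follows a c) : b = c :=
  hG.2.2.2.1 a b c hb.1 hc.1 hb.2 hc.2

theorem IsGentle.follows_left_unique (hG : G.IsGentle) {a b c : G.E} (ha : Follows a c)
    (hb : Follows b c) : a = b :=
  hG.2.2.2.2.2.1 a b c ha.1 hb.1 ha.2 hb.2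

section Shortcut

variable {J : Set G.V}

theorem shortcut_arrows_ne_nil (s : (G.shortcut J).E) : s.2.2.1.arrows ≠ [] :=
  PathG.arrows_ne_nil s.2.2.2.1

def firstArrow (s : (G.shortcut J).E) : G.E := s.2.2.1.arrows.head (shortcut_arrows_ne_nil s)

def lastArrow (s : (G.shortcut J).E) : G.E := s.2.2.1.arrows.getLast (shortcut_arrows_ne_nil s)

theorem firstArrow_eq_of_head?_eq {s : (G.shortcut J).E} {f : G.E}
    (h : s.2.2.1.arrows.head? = some f) : firstArrow s = f := by
  rw [List.head?_eq_some_head (shortcut_arrows_ne_nil s)] at h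
  exact Option.some.inj h

theorem src_firstArrow (s : (G.shortcut J).E) : G.src (firstArrow s) = s.1.1 :=
  PathG.src_of_mem_head? (List.head_mem_head? _)

theorem tgt_lastArrow (s : (G.shortcut J).E) : G.tgt (lastArrow s) = s.2.1.1 :=
  PathG.tgt_of_mem_getLast? (List.getLast_mem_getLast? _)

theorem tgt_lastArrow_eq_src_firstArrow {x y : (G.shortcut J).E} (h : x.2.1 = y.1) :
    G.tgt (lastArrow x) = G.src (firstArrow y) := by
  rw [tgt_lastArrow, src_firstArrow, h]

theorem shortcut_ext {x y : (G.shortcut J).E} (h : x.2.2.1.arrows = y.2.2.1.arrows) : x = y := by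
  have hsrc : x.1 = y.1 := by
    refine Subtype.ext ?_
    rw [← src_firstArrow x, ← src_firstArrow y, firstArrow, firstArrow]
    simp only [h]
  obtain ⟨a, b, p, hp⟩ := x
  obtain ⟨a', b', q, hq⟩ := y
  cases hsrc
  obtain ⟨hb, hpq⟩ := Sigma.mk.inj_iff.mp (PathG.sigma_eq_of_arrows_eq p q h)
  obtain rfl : b = b' := Subtype.ext hb
  cases eq_of_heq hpq
  rfl

theorem tgt_notMem_of_mem_dropLast (s : (G.shortcut J).E) :
    ∀ e ∈ s.2.2.1.arrows.dropLast, G.tgt e ∉ J := by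
  intro e he
  exact s.2.2.2.2.1 _ (by rw [PathG.mids_eq, ← List.map_dropLast]; exact List.mem_map_of_mem he)

theorem src_notMem_of_mem_tail (s : (G.shortcut J).E) :
    ∀ e ∈ s.2.2.1.arrows.tail, G.src e ∉ J := by
  intro e he
  refine s.2.2.2.2.1 _ ?_
  rw [PathG.mids_eq, ← List.map_tail_eq_dropLast_map s.2.2.1.isChain_arrows]
  exact List.mem_map_of_mem he

theorem shortcut_eq_of_firstArrow_eq (hG : G.IsGentle) {x y : (G.shortcut J).E}
    (h : firstArrow x = firstArrow y) : x = y := by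
  refine shortcut_ext (List.IsChain.eq_of_head_eq_of_rightUnique (R := Follows) (P := (G.tgt · ∈ J))
    (fun _ _ _ => hG.follows_right_unique) _ _ (isChain_follows_arrows x.2.2.2.2.2)
    (isChain_follows_arrows y.2.2.2.2.2) h (tgt_notMem_of_mem_dropLast x)
    (tgt_notMem_of_mem_dropLast y) ?_ ?_)
  · exact (tgt_lastArrow x).symm ▸ x.2.1.2
  · exact (tgt_lastArrow y).symm ▸ y.2.1.2

theorem shortcut_eq_of_lastArrow_eq (hG : G.IsGentle) {x y : (G.shortcut J).E}
    (h : lastArrow x = lastArrow y) : x = y := by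
  refine shortcut_ext (List.reverse_inj.mp ?_)
  refine List.IsChain.eq_of_head_eq_of_rightUnique (R := flip Follows) (P := (G.src · ∈ J))
    (fun _ _ _ hb hc => hG.follows_left_unique hb hc)
    (by simpa using shortcut_arrows_ne_nil x) (by simpa using shortcut_arrows_ne_nil y)
    (List.isChain_reverse.mpr (isChain_follows_arrows x.2.2.2.2.2))
    (List.isChain_reverse.mpr (isChain_follows_arrows y.2.2.2.2.2))
    (by simpa [lastArrow] using h) ?_ ?_ ?_ ?_
  · simpa using src_notMem_of_mem_tail x
  · simpa using src_notMem_of_mem_tail y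
  · rw [List.getLast_reverse]; exact (src_firstArrow x).symm ▸ x.1.2
  · rw [List.getLast_reverse]; exact (src_firstArrow y).symm ▸ y.1.2

theorem mem_shortcut_rel_iff {x y : (G.shortcut J).E} (h : x.2.1 = y.1) :
    (x, y) ∈ (G.shortcut J).rel ↔ (lastArrow x, firstArrow y) ∈ G.rel := by
  have hx := (hasRel_iff x.2.2.1).not_left.mp x.2.2.2.2.2
  have hy := (hasRel_iff y.2.2.1).not_left.mp y.2.2.2.2.2
  change (∃ _ : x.2.1 = y.1, G.HasRel _) ↔ _
  rw [exists_prop_of_true h, hasRel_iff, PathG.arrows_concat, arrows_cast, List.isChain_append,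
    List.getLast?_eq_some_getLast (shortcut_arrows_ne_nil x),
    List.head?_eq_some_head (shortcut_arrows_ne_nil y)]
  simp [hx, hy, lastArrow, firstArrow]

end Shortcut

theorem IsGentle.shortcut (hG : G.IsGentle) (J : Set G.V) : (G.shortcut J).IsGentle := by
  refine ⟨fun r hr => hr.1, fun v => ?_, fun v => ?_, ?_, ?_, ?_, ?_⟩
  · have hv := hG.2.1 v.1
    rw [← Set.encard_le_two_iff] at hv ⊢
    refine (Set.encard_le_encard_of_injOn (f := firstArrow) (fun x hx => ?_)
      (fun x _ y _ h => shortcut_eq_of_firstArrow_eq hG h)).trans hv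
    exact (src_firstArrow x).trans (congrArg Subtype.val hx)
  · have hv := hG.2.2.1 v.1
    rw [← Set.encard_le_two_iff] at hv ⊢
    refine (Set.encard_le_encard_of_injOn (f := lastArrow) (fun x hx => ?_)
      (fun x _ y _ h => shortcut_eq_of_lastArrow_eq hG h)).trans hv
    exact (tgt_lastArrow x).trans (congrArg Subtype.val hx)
  · intro x y z hy hz hny hnz
    exact shortcut_eq_of_firstArrow_eq hG <| hG.2.2.2.1 _ _ _
      (tgt_lastArrow_eq_src_firstArrow hy) (tgt_lastArrow_eq_src_firstArrow hz)
      (mt (mem_shortcut_rel_iff hy).mpr hny) (mt (mem_shortcut_rel_iff hz).mpr hnz)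
  · intro x y z hy hz hry hrz
    exact shortcut_eq_of_firstArrow_eq hG <| hG.2.2.2.2.1 _ _ _
      (tgt_lastArrow_eq_src_firstArrow hy) (tgt_lastArrow_eq_src_firstArrow hz)
      ((mem_shortcut_rel_iff hy).mp hry) ((mem_shortcut_rel_iff hz).mp hrz)
  · intro x y z hx hy hnx hny
    exact shortcut_eq_of_lastArrow_eq hG <| hG.2.2.2.2.2.1 _ _ _
      (tgt_lastArrow_eq_src_firstArrow hx) (tgt_lastArrow_eq_src_firstArrow hy)
      (mt (mem_shortcut_rel_iff hx).mpr hnx) (mt (mem_shortcut_rel_iff hy).mpr hny)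
  · intro x y z hx hy hrx hry
    exact shortcut_eq_of_lastArrow_eq hG <| hG.2.2.2.2.2.2 _ _ _
      (tgt_lastArrow_eq_src_firstArrow hx) (tgt_lastArrow_eq_src_firstArrow hy)
      ((mem_shortcut_rel_iff hx).mp hrx) ((mem_shortcut_rel_iff hy).mp hry)

end Gentle

section PathAlgebra

variable (k : Type) [CommRing k] (G : QuivRel) [Fintype G.V]

noncomputable def arr (e : G.E) : Alg k G :=
  RingQuot.mkAlgHom k (PARel k G) (FreeAlgebra.ι k (Sum.inr e))

theorem vtx_eq_mkAlgHom (v : G.V) :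
    vtx k G v = RingQuot.mkAlgHom k (PARel k G) (FreeAlgebra.ι k (Sum.inl v)) := by
  rw [vtx, ← RingQuot.mkAlgHom_coe k]
  rfl

theorem sum_vtx : ∑ v : G.V, vtx k G v = 1 := by
  simpa only [vtx_eq_mkAlgHom, map_sum, map_one] using
    RingQuot.mkAlgHom_rel k (PARel.vsum (k := k) (G := G))

variable {G}

theorem vtx_tgt_mul_arr (e : G.E) : vtx k G (G.tgt e) * arr k G e = arr k G e := by
  simpa only [vtx_eq_mkAlgHom, arr, map_mul] using RingQuot.mkAlgHom_rel k (PARel.etgt e)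

theorem arr_mul_vtx_src (e : G.E) : arr k G e * vtx k G (G.src e) = arr k G e := by
  simpa only [vtx_eq_mkAlgHom, arr, map_mul] using RingQuot.mkAlgHom_rel k (PARel.esrc e)

theorem arr_mul_arr_of_mem_rel {a b : G.E} (h : (a, b) ∈ G.rel) :
    arr k G b * arr k G a = 0 := by
  simpa only [arr, map_mul, map_zero] using RingQuot.mkAlgHom_rel k (PARel.zrel a b h)

theorem vtx_mul_arr (v : G.V) (e : G.E) :
    vtx k G v * arr k G e = if v = G.tgt e then arr k G e else 0 := by
  conv_lhs => rw [← vtx_tgt_mul_arr, ← mul_assoc, vtx_mul]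
  split_ifs <;> simp_all [vtx_tgt_mul_arr]

variable (G)

noncomputable def Alg.lift {A : Type} [Semiring A] [Algebra k A] (fV : G.V → A) (fE : G.E → A)
    (hmul : ∀ v w, fV v * fV w = if v = w then fV v else 0) (hsum : ∑ v, fV v = 1)
    (htgt : ∀ e, fV (G.tgt e) * fE e = fE e) (hsrc : ∀ e, fE e * fV (G.src e) = fE e)
    (hrel : ∀ a b, (a, b) ∈ G.rel → fE b * fE a = 0) : Alg k G →ₐ[k] A :=
  RingQuot.liftAlgHom k ⟨FreeAlgebra.lift k (Sum.elim fV fE), by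
    rintro _ _ (⟨v, w⟩ | _ | ⟨e⟩ | ⟨e⟩ | ⟨a, b, h⟩)
    · split_ifs with h <;> simp [hmul, h]
    · simpa using hsum
    · simpa using htgt e
    · simpa using hsrc e
    · simpa using hrel a b h⟩

section Lift

variable {G} {A : Type} [Semiring A] [Algebra k A] {fV : G.V → A} {fE : G.E → A} {hmul hsum htgt
  hsrc hrel}

@[simp] theorem Alg.lift_vtx (v : G.V) :
    Alg.lift k G fV fE hmul hsum htgt hsrc hrel (vtx k G v) = fV v := by
  rw [Alg.lift, vtx_eq_mkAlgHom, RingQuot.liftAlgHom_mkAlgHom_apply]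
  simp

@[simp] theorem Alg.lift_arr (e : G.E) :
    Alg.lift k G fV fE hmul hsum htgt hsrc hrel (arr k G e) = fE e := by
  rw [Alg.lift, arr, RingQuot.liftAlgHom_mkAlgHom_apply]
  simp

end Lift

theorem Alg.induction {P : Alg k G → Prop} (vtx : ∀ v, P (vtx k G v)) (arr : ∀ e, P (arr k G e))
    (algebraMap : ∀ c, P (algebraMap k (Alg k G) c)) (add : ∀ x y, P x → P y → P (x + y))
    (mul : ∀ x y, P x → P y → P (x * y)) (z : Alg k G) : P z := by
  obtain ⟨w, rfl⟩ := RingQuot.mkAlgHom_surjective k (PARel k G) z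
  induction w using FreeAlgebra.induction with
  | grade0 c => simpa only [AlgHom.commutes] using algebraMap c
  | grade1 x => rcases x with v | e; exacts [vtx_eq_mkAlgHom k G v ▸ vtx v, arr e]
  | mul x y hx hy => simpa only [map_mul] using mul _ _ hx hy
  | add x y hx hy => simpa only [map_add] using add _ _ hx hy

end PathAlgebra

section PathElt

variable (k : Type) [CommRing k] {G : QuivRel} [Fintype G.V]

noncomputable def pathElt : {a b : G.V} → PathG G a b → Alg k G
  | _, _, .nil a => vtx k G a
  | _, _, .cons p e _ _ => arr k G e * pathElt p

@[simp] theorem pathElt_nil (a : G.V) : pathElt k (.nil a : PathG G a a) = vtx k G a := by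
  simp only [pathElt]

@[simp] theorem pathElt_cons {a b c : G.V} (p : PathG G a b) (e : G.E) (h₁ : G.src e = b)
    (h₂ : G.tgt e = c) : pathElt k (p.cons e h₁ h₂) = arr k G e * pathElt k p := by
  simp only [pathElt]

theorem pathElt_cast {a b b' : G.V} (h : b = b') (p : PathG G a b) :
    pathElt k (h ▸ p : PathG G a b') = pathElt k p := by
  cases h; rfl

theorem vtx_mul_pathElt (v : G.V) {a b : G.V} (p : PathG G a b) :
    vtx k G v * pathElt k p = if v = b then pathElt k p else 0 := by
  cases p with
  | nil => rw [pathElt_nil, vtx_mul]; split_ifs with h <;> simp [h]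
  | cons p e h₁ h₂ =>
    subst h₂
    rw [pathElt_cons, ← mul_assoc, ← vtx_tgt_mul_arr, ← mul_assoc, vtx_mul]
    split_ifs <;> simp_all

theorem pathElt_mul_vtx {a b : G.V} (p : PathG G a b) (v : G.V) :
    pathElt k p * vtx k G v = if v = a then pathElt k p else 0 := by
  induction p with
  | nil => simp [vtx_mul, eq_comm]
  | cons p e h₁ h₂ ih => rw [pathElt_cons, mul_assoc, ih]; split_ifs <;> simp

theorem pathElt_concat {a b c : G.V} (p : PathG G a b) (q : PathG G b c) :
    pathElt k (p.concat q) = pathElt k q * pathElt k p := by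
  induction q with
  | nil => simp [vtx_mul_pathElt]
  | cons q e h₁ h₂ ih => simp [ih, mul_assoc]

theorem pathElt_eq_zero_of_hasRel {a b : G.V} {p : PathG G a b} (h : G.HasRel p) :
    pathElt k p = 0 := by
  induction p with
  | nil => simp [hasRel_iff] at h
  | cons p e h₁ h₂ ih =>
    rcases hasRel_cons_iff.mp h with h | ⟨x, hx, hxe⟩
    · rw [pathElt_cons, ih h, mul_zero]
    · cases p with
      | nil => simp at hx
      | cons p x' _ _ =>
        obtain rfl : x' = x := by simpa using hx
        rw [pathElt_cons, pathElt_cons, ← mul_assoc, arr_mul_arr_of_mem_rel k hxe, zero_mul]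

theorem pathElt_mul_pathElt {a b c d : G.V} (p : PathG G a b) (q : PathG G c d) :
    pathElt k q * pathElt k p = if h : b = c then pathElt k (p.concat (h ▸ q)) else 0 := by
  split_ifs with h
  · subst h; rw [pathElt_concat]
  · have hq := pathElt_mul_vtx k q c
    rw [if_pos rfl] at hq
    rw [← hq, mul_assoc, vtx_mul_pathElt, if_neg (Ne.symm h), mul_zero]

open scoped Pointwise in
variable (G) in
theorem span_pathElt :
    Submodule.span k (Set.range fun p : Σ a b : G.V, PathG G a b => pathElt k p.2.2) = ⊤ := by
  set S := Set.range fun p : Σ a b : G.V, PathG G a b => pathElt k p.2.2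
  have hvtx : ∀ v, vtx k G v ∈ Submodule.span k S :=
    fun v => Submodule.subset_span ⟨⟨v, v, .nil v⟩, pathElt_nil k v⟩
  refine eq_top_iff.mpr fun z _ => Alg.induction k G hvtx (fun e => Submodule.subset_span
    ⟨⟨_, _, (PathG.nil _).cons e rfl rfl⟩, by simp [arr_mul_vtx_src]⟩) (fun c => ?_)
    (fun _ _ => Submodule.add_mem _) (fun x y hx hy => ?_) z
  · rw [Algebra.algebraMap_eq_smul_one, ← sum_vtx]
    exact Submodule.smul_mem _ c (Submodule.sum_mem _ fun v _ => hvtx v)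
  · have hSS : S * S ⊆ insert 0 S := by
      rintro _ ⟨_, ⟨⟨a, b, p⟩, rfl⟩, _, ⟨⟨c, d, q⟩, rfl⟩, rfl⟩
      show pathElt k p * pathElt k q ∈ _
      rw [pathElt_mul_pathElt]
      split_ifs
      exacts [Or.inr ⟨⟨_, _, _⟩, rfl⟩, Or.inl rfl]
    have hxy := Submodule.mul_mem_mul hx hy
    rw [Submodule.span_mul_span] at hxy
    exact Submodule.span_insert_zero (R := k) (M := Alg k G) (s := S) ▸ Submodule.span_mono hSS hxy

end PathElt

section ToCorner

variable (k : Type) [CommRing k] {G : QuivRel} [Fintype G.V] (J : Set G.V) [Fintype J]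

theorem vtxSum_mul_pathElt {a b : G.V} (p : PathG G a b) :
    vtxSum k G J * pathElt k p = if b ∈ J then pathElt k p else 0 := by
  simp only [vtxSum, Finset.sum_mul, vtx_mul_pathElt]
  split_ifs with hb
  · rw [Finset.sum_eq_single ⟨b, hb⟩ (fun j _ hj => if_neg fun h => hj (Subtype.ext h))
      (by simp), if_pos rfl]
  · exact Finset.sum_eq_zero fun j _ => if_neg fun h : (j : G.V) = b => hb (h ▸ j.2)

theorem pathElt_mul_vtxSum {a b : G.V} (p : PathG G a b) :
    pathElt k p * vtxSum k G J = if a ∈ J then pathElt k p else 0 := by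
  simp only [vtxSum, Finset.mul_sum, pathElt_mul_vtx]
  split_ifs with ha
  · rw [Finset.sum_eq_single ⟨a, ha⟩ (fun j _ hj => if_neg fun h => hj (Subtype.ext h))
      (by simp), if_pos rfl]
  · exact Finset.sum_eq_zero fun j _ => if_neg fun h : (j : G.V) = a => ha (h ▸ j.2)

noncomputable def pathCorner {a b : G.V} (ha : a ∈ J) (hb : b ∈ J) (p : PathG G a b) :
    Corner (vtxSum k G J) (vtxSum_idem k G J) :=
  ⟨pathElt k p, by rw [vtxSum_mul_pathElt, if_pos hb], by rw [pathElt_mul_vtxSum, if_pos ha]⟩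

theorem pathCorner_concat {a b c : G.V} (ha : a ∈ J) (hb : b ∈ J) (hc : c ∈ J)
    (p : PathG G a b) (q : PathG G b c) :
    pathCorner k J ha hc (p.concat q) = pathCorner k J hb hc q * pathCorner k J ha hb p :=
  Subtype.ext (pathElt_concat k p q)

theorem proj_pathElt {a b : G.V} (p : PathG G a b) :
    Corner.proj k (vtxSum_idem k G J) (pathElt k p) =
      if h : a ∈ J ∧ b ∈ J then pathCorner k J h.1 h.2 p else 0 := by
  refine Subtype.ext ?_
  rw [Corner.proj_apply_val, vtxSum_mul_pathElt]
  split_ifs <;> simp_all [pathElt_mul_vtxSum, pathCorner]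

theorem pathCorner_nil_mul_pathCorner {a b : G.V} (ha : a ∈ J) (hb : b ∈ J) (p : PathG G a b) :
    pathCorner k J hb hb (.nil b) * pathCorner k J ha hb p = pathCorner k J ha hb p :=
  Subtype.ext <| (Corner.mul_val _ _).trans <| by
    simp only [pathCorner, pathElt_nil]
    exact (vtx_mul_pathElt k _ _).trans (if_pos rfl)

theorem pathCorner_mul_pathCorner_nil {a b : G.V} (ha : a ∈ J) (hb : b ∈ J) (p : PathG G a b) :
    pathCorner k J ha hb p * pathCorner k J ha ha (.nil a) = pathCorner k J ha hb p :=
  Subtype.ext <| (Corner.mul_val _ _).trans <| by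
    simp only [pathCorner, pathElt_nil]
    exact (pathElt_mul_vtx k _ _).trans (if_pos rfl)

theorem pathCorner_nil_mul_pathCorner_nil (i j : (G.shortcut J).V) :
    pathCorner k J i.2 i.2 (.nil i.1) * pathCorner k J j.2 j.2 (.nil j.1) =
      if i = j then pathCorner k J i.2 i.2 (.nil i.1) else 0 := by
  split_ifs with h
  · subst h
    exact pathCorner_nil_mul_pathCorner k J i.2 i.2 _
  · refine Subtype.ext ((Corner.mul_val _ _).trans ?_)
    simp only [pathCorner, pathElt_nil, vtx_mul, Corner.zero_val]
    exact if_neg fun h' => h (Subtype.ext h')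

theorem sum_pathCorner_nil : ∑ j : J, pathCorner k J j.2 j.2 (.nil j.1) = 1 :=
  Subtype.ext <| (Corner.val_sum _ _).trans (by simp only [pathCorner, pathElt_nil]; rfl)

noncomputable def toCorner :
    Alg k (G.shortcut J) →ₐ[k] Corner (vtxSum k G J) (vtxSum_idem k G J) :=
  Alg.lift k (G.shortcut J) (fun j => pathCorner k J j.2 j.2 (.nil j.1))
    (fun s => pathCorner k J s.1.2 s.2.1.2 s.2.2.1) (pathCorner_nil_mul_pathCorner_nil k J)
    (sum_pathCorner_nil k J) (fun _ => pathCorner_nil_mul_pathCorner k J _ _ _)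
    (fun _ => pathCorner_mul_pathCorner_nil k J _ _ _)
    (fun x y ⟨h, hxy⟩ => Subtype.ext <| by
      change pathElt k y.2.2.1 * pathElt k x.2.2.1 = 0
      rw [← pathElt_cast k (congrArg Subtype.val h), ← pathElt_concat]
      exact pathElt_eq_zero_of_hasRel k hxy)

@[simp] theorem toCorner_vtx (j : J) :
    toCorner k J (vtx k (G.shortcut J) j) = pathCorner k J j.2 j.2 (.nil j.1) :=
  Alg.lift_vtx (G := G.shortcut J) k j

@[simp] theorem toCorner_arr (s : (G.shortcut J).E) :
    toCorner k J (arr k (G.shortcut J) s) = pathCorner k J s.1.2 s.2.1.2 s.2.2.1 :=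
  Alg.lift_arr (G := G.shortcut J) k s

theorem pathCorner_mem_range_of_mids {a b : G.V} (ha : a ∈ J) (hb : b ∈ J) (p : PathG G a b)
    (hp : 0 < p.length) (hmids : ∀ x ∈ p.mids, x ∉ J) :
    pathCorner k J ha hb p ∈ (toCorner k J).range := by
  by_cases hrel : G.HasRel p
  · convert zero_mem (toCorner k J).range
    exact Subtype.ext (pathElt_eq_zero_of_hasRel k hrel)
  · exact ⟨arr k _ ⟨⟨a, ha⟩, ⟨b, hb⟩, p, hp, hmids, hrel⟩, toCorner_arr k J _⟩

theorem pathCorner_mem_range {a b : G.V} (ha : a ∈ J) (hb : b ∈ J) (p : PathG G a b) :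
    pathCorner k J ha hb p ∈ (toCorner k J).range := by
  induction hn : p.length using Nat.strong_induction_on generalizing b with
  | _ n ih =>
  rcases Nat.eq_zero_or_pos n with rfl | hpos
  · cases p with
    | nil => exact ⟨vtx k _ ⟨a, ha⟩, toCorner_vtx k J _⟩
    | cons => simp at hn
  · obtain ⟨m, hm, q, s, rfl, hs, hsm⟩ := p.exists_eq_concat_of_mem (hn ▸ hpos) ha
    rw [pathCorner_concat k J ha hm hb]
    exact mul_mem (pathCorner_mem_range_of_mids k J hm hb s hs hsm)
      (ih _ (by simp only [PathG.length_concat] at hn; omega) hm q rfl)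

theorem toCorner_surjective : Function.Surjective (toCorner k J) := by
  have h : LinearMap.range (Corner.proj k (vtxSum_idem k G J)) ≤
      Subalgebra.toSubmodule (toCorner k J).range := by
    rw [LinearMap.range_eq_map, ← span_pathElt k G, Submodule.map_span_le]
    rintro _ ⟨⟨a, b, p⟩, rfl⟩
    rw [proj_pathElt]
    split_ifs with hab
    exacts [pathCorner_mem_range k J hab.1 hab.2 p, zero_mem _]
  exact fun c => h ⟨c.1, Corner.proj_val k _ c⟩

end ToCorner

structure Tail (G : QuivRel) (J : Set G.V) where
  start : J
  tgt : G.V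
  path : PathG G start.1 tgt
  not_hasRel : ¬ G.HasRel path
  mids_notMem : ∀ x ∈ path.mids, x ∉ J

namespace Tail

variable {G : QuivRel} {J : Set G.V}

theorem mk_eq_mk {j : J} {v : G.V} {p q : PathG G j.1 v} (h : p = q) {hp hp' hq hq'} :
    (⟨j, v, p, hp, hp'⟩ : Tail G J) = ⟨j, v, q, hq, hq'⟩ := by
  subst h; rfl

def nil (j : J) : Tail G J :=
  ⟨j, j.1, .nil j.1, by simp [hasRel_iff], by simp⟩

def ofArrow (j : J) (f : G.E) (hf : G.src f = j.1) : Tail G J :=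
  ⟨j, G.tgt f, (PathG.nil j.1).cons f hf rfl, by simp [hasRel_iff], by simp⟩

theorem ofArrow_congr {i j : J} (h : i = j) {f : G.E}
    (hi : G.src f = i.1) (hj : G.src f = j.1) : ofArrow i f hi = ofArrow j f hj := by
  subst h; rfl

def ofShortcut (s : (G.shortcut J).E) : Tail G J :=
  ⟨s.1, s.2.1.1, s.2.2.1, s.2.2.2.2.2, s.2.2.2.2.1⟩

def toShortcut (σ : Tail G J) (hJ : σ.tgt ∈ J) (hl : 0 < σ.path.length) : (G.shortcut J).E :=
  ⟨σ.start, ⟨σ.tgt, hJ⟩, σ.path, hl, σ.mids_notMem, σ.not_hasRel⟩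

def snoc (σ : Tail G J) (f : G.E) (hf : G.src f = σ.tgt)
    (hrel : ¬ G.HasRel (σ.path.cons f hf rfl)) (hJ : σ.tgt ∈ J → σ.path.length = 0) :
    Tail G J :=
  ⟨σ.start, G.tgt f, σ.path.cons f hf rfl, hrel, by
    intro x hx
    simp only [PathG.mids_cons, List.mem_append] at hx
    split_ifs at hx with h
    · simpa using σ.mids_notMem x (by simpa using hx)
    · rcases hx with hx | hx
      · exact σ.mids_notMem x hx
      · rw [List.mem_singleton.mp hx]; exact fun h' => h (hJ h')⟩

theorem eq_nil_or_eq_ofShortcut (σ : Tail G J) (hσ : σ.tgt ∈ J) :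
    (∃ j, σ = nil j) ∨ ∃ s, σ = ofShortcut s := by
  rcases Nat.eq_zero_or_pos σ.path.length with h | h
  · obtain ⟨j, v, p, _, _⟩ := σ
    cases p with
    | nil => exact Or.inl ⟨j, rfl⟩
    | cons => simp at h
  · exact Or.inr ⟨σ.toShortcut hσ h, rfl⟩

end Tail

section TailRep

variable (k : Type) [CommRing k] {G : QuivRel} (J : Set G.V) [Fintype J]

abbrev TailModule : Type := Tail G J →₀ Alg k (G.shortcut J)

noncomputable def tailVtx (v : G.V) : TailModule k J →ₗ[k] TailModule k J :=
  Finsupp.lsum k fun σ => if σ.tgt = v then Finsupp.lsingle σ else 0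

noncomputable def tailArrStep (f : G.E) (σ : Tail G J) :
    Alg k (G.shortcut J) →ₗ[k] TailModule k J :=
  if hf : G.src f = σ.tgt then
    if hrel : G.HasRel (σ.path.cons f hf rfl) then 0
    else if hJ : σ.tgt ∈ J ∧ 0 < σ.path.length then
      Finsupp.lsingle (Tail.ofArrow ⟨σ.tgt, hJ.1⟩ f hf) ∘ₗ
        LinearMap.mulLeft k (arr k _ (σ.toShortcut hJ.1 hJ.2))
    else Finsupp.lsingle (σ.snoc f hf hrel fun h => by simpa using fun hl => hJ ⟨h, hl⟩)
  else 0

noncomputable def tailArr (f : G.E) : TailModule k J →ₗ[k] TailModule k J :=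
  Finsupp.lsum k (tailArrStep k J f)

variable {k J}

theorem tailVtx_single (v : G.V) (σ : Tail G J) (x : Alg k (G.shortcut J)) :
    tailVtx k J v (Finsupp.single σ x) = if σ.tgt = v then Finsupp.single σ x else 0 := by
  rw [tailVtx, Finsupp.lsum_single]
  split_ifs <;> rfl

theorem tailArr_single (f : G.E) (σ : Tail G J) (x : Alg k (G.shortcut J)) :
    tailArr k J f (Finsupp.single σ x) = tailArrStep k J f σ x :=
  Finsupp.lsum_single _ _ _ _

theorem tailArrStep_of_ne {f : G.E} {σ : Tail G J} (hf : G.src f ≠ σ.tgt) :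
    tailArrStep k J f σ = 0 := by
  rw [tailArrStep, dif_neg hf]

theorem tailArrStep_of_hasRel {f : G.E} {σ : Tail G J} (hf : G.src f = σ.tgt)
    (hrel : G.HasRel (σ.path.cons f hf rfl)) : tailArrStep k J f σ = 0 := by
  rw [tailArrStep, dif_pos hf, dif_pos hrel]

theorem tailArrStep_of_mem {f : G.E} {σ : Tail G J} (hf : G.src f = σ.tgt)
    (hrel : ¬ G.HasRel (σ.path.cons f hf rfl)) (hJ : σ.tgt ∈ J) (hl : 0 < σ.path.length) :
    tailArrStep k J f σ = Finsupp.lsingle (Tail.ofArrow ⟨σ.tgt, hJ⟩ f hf) ∘ₗ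
      LinearMap.mulLeft k (arr k _ (σ.toShortcut hJ hl)) := by
  rw [tailArrStep, dif_pos hf, dif_neg hrel, dif_pos ⟨hJ, hl⟩]

theorem tailArrStep_eq_zero_of_mem_rel {a b : G.E} {σ : Tail G J}
    (ha : a ∈ σ.path.arrows.getLast?) (hab : (a, b) ∈ G.rel) : tailArrStep k J b σ = 0 := by
  by_cases hb : G.src b = σ.tgt
  · exact tailArrStep_of_hasRel hb (hasRel_cons_iff.mpr (Or.inr ⟨a, ha, hab⟩))
  · exact tailArrStep_of_ne hb

theorem tailArr_single_nil (j : J) (f : G.E) (hf : G.src f = j.1) (x : Alg k (G.shortcut J)) :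
    tailArr k J f (Finsupp.single (Tail.nil j) x) =
      Finsupp.single (Tail.ofArrow j f hf) x := by
  rw [tailArr_single, tailArrStep, dif_pos (show G.src f = (Tail.nil j).tgt from hf),
    dif_neg (by simp [Tail.nil, hasRel_iff]),
    dif_neg (by simp [Tail.nil])]
  rfl

theorem tailArr_single_ofShortcut (s : (G.shortcut J).E) (f : G.E) (hf : G.src f = s.2.1.1)
    (x : Alg k (G.shortcut J)) :
    tailArr k J f (Finsupp.single (Tail.ofShortcut s) x) =
      if (lastArrow s, f) ∈ G.rel then 0
      else Finsupp.single (Tail.ofArrow s.2.1 f hf) (arr k _ s * x) := by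
  have hrel : G.HasRel (s.2.2.1.cons f hf rfl) ↔ (lastArrow s, f) ∈ G.rel := by
    simp [hasRel_cons_iff, s.2.2.2.2.2, lastArrow,
      List.getLast?_eq_some_getLast (shortcut_arrows_ne_nil s)]
  rw [tailArr_single]
  split_ifs with h
  · rw [tailArrStep_of_hasRel (k := k) (σ := Tail.ofShortcut s) hf (hrel.mpr h)]
    rfl
  · rw [tailArrStep_of_mem (k := k) (σ := Tail.ofShortcut s) hf (hrel.not.mpr h) s.2.1.2 s.2.2.2.1]
    rfl

theorem tailVtx_mul_tailVtx (v w : G.V) :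
    tailVtx k J v * tailVtx k J w = if v = w then tailVtx k J v else 0 :=
  Finsupp.lhom_ext fun σ x => by
    by_cases h : v = w
    · subst h
      simp only [Module.End.mul_apply, tailVtx_single]
      split_ifs <;> simp [tailVtx_single, *]
    · simp only [Module.End.mul_apply, tailVtx_single, if_neg h, LinearMap.zero_apply]
      split_ifs <;> simp [tailVtx_single, *, Ne.symm h]

theorem sum_tailVtx [Fintype G.V] : ∑ v : G.V, tailVtx k J v = 1 :=
  Finsupp.lhom_ext fun σ x => by simp [LinearMap.sum_apply, tailVtx_single]

theorem tailVtx_tgt_mul_tailArr (f : G.E) :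
    tailVtx k J (G.tgt f) * tailArr k J f = tailArr k J f :=
  Finsupp.lhom_ext fun σ x => by
    rw [Module.End.mul_apply, tailArr_single, tailArrStep]
    split_ifs <;>
      simp only [LinearMap.comp_apply, LinearMap.mulLeft_apply, Finsupp.lsingle_apply,
        LinearMap.zero_apply, map_zero, tailVtx_single, Tail.ofArrow, Tail.snoc, ite_true]

theorem tailArr_mul_tailVtx_src (f : G.E) :
    tailArr k J f * tailVtx k J (G.src f) = tailArr k J f :=
  Finsupp.lhom_ext fun σ x => by
    rw [Module.End.mul_apply, tailVtx_single]
    split_ifs with h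
    · rfl
    · rw [map_zero, tailArr_single, tailArrStep_of_ne (Ne.symm h), LinearMap.zero_apply]

theorem tailArr_mul_tailArr_of_mem_rel {a b : G.E} (hab : (a, b) ∈ G.rel) :
    tailArr k J b * tailArr k J a = 0 :=
  Finsupp.lhom_ext fun σ x => by
    rw [Module.End.mul_apply, tailArr_single, tailArrStep]
    split_ifs with h₁ h₂ h₃
    · rfl
    · rw [LinearMap.comp_apply, Finsupp.lsingle_apply, tailArr_single,
        tailArrStep_eq_zero_of_mem_rel (σ := Tail.ofArrow _ a h₁) (by simp [Tail.ofArrow]) hab]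
      rfl
    · rw [Finsupp.lsingle_apply, tailArr_single,
        tailArrStep_eq_zero_of_mem_rel (σ := σ.snoc a h₁ h₂ _) (by simp [Tail.snoc]) hab]
      rfl
    · rfl

variable (k J) [Fintype G.V]

noncomputable def tailRep : Alg k G →ₐ[k] Module.End k (TailModule k J) :=
  Alg.lift k G (tailVtx k J) (tailArr k J) tailVtx_mul_tailVtx sum_tailVtx
    tailVtx_tgt_mul_tailArr tailArr_mul_tailVtx_src fun _ _ => tailArr_mul_tailArr_of_mem_rel

@[simp] theorem tailRep_vtx (v : G.V) : tailRep k J (vtx k G v) = tailVtx k J v :=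
  Alg.lift_vtx k v

@[simp] theorem tailRep_arr (f : G.E) : tailRep k J (arr k G f) = tailArr k J f :=
  Alg.lift_arr k f

variable {k J}

theorem tailRep_pathElt_single {j : J} {a b : G.V} (t : PathG G j.1 a) (p : PathG G a b)
    (ht : ¬ G.HasRel t) (htm : ∀ x ∈ t.mids, x ∉ J) (hrel : ¬ G.HasRel (t.concat p))
    (hmids : ∀ x ∈ (t.concat p).mids, x ∉ J) (x : Alg k (G.shortcut J)) :
    tailRep k J (pathElt k p) (Finsupp.single ⟨j, a, t, ht, htm⟩ x) =
      Finsupp.single ⟨j, b, t.concat p, hrel, hmids⟩ x := by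
  induction p with
  | nil =>
    rw [pathElt_nil, tailRep_vtx, tailVtx_single, if_pos rfl]
    exact congrArg (Finsupp.single · x) (Tail.mk_eq_mk (PathG.concat_nil t).symm)
  | cons p f h₁ h₂ ih =>
    subst h₂
    rw [PathG.concat_cons] at hrel hmids
    have hrel' : ¬ G.HasRel (t.concat p) := fun h => hrel (hasRel_cons_iff.mpr (Or.inl h))
    have hmids' : ∀ y ∈ (t.concat p).mids, y ∉ J := fun y hy =>
      hmids y (by rw [PathG.mids_cons]; exact List.mem_append_left _ hy)
    have hJ : ¬ ((Tail.mk j _ (t.concat p) hrel' hmids').tgt ∈ J ∧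
        0 < (Tail.mk j _ (t.concat p) hrel' hmids').path.length) := fun ⟨hJ, hl⟩ =>
      hmids _ (by rw [PathG.mids_cons, if_neg (Nat.pos_iff_ne_zero.mp hl)]; simp) hJ
    rw [pathElt_cons, map_mul, Module.End.mul_apply, ih hrel' hmids', tailRep_arr, tailArr_single,
      tailArrStep, dif_pos h₁, dif_neg hrel, dif_neg hJ]
    exact congrArg (Finsupp.single · x) (Tail.mk_eq_mk (PathG.concat_cons ..).symm)

end TailRep

section TailEval

variable (k : Type) [CommRing k] {G : QuivRel} (J : Set G.V) [Fintype J]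

noncomputable def tailWeight (σ : Tail G J) : Alg k (G.shortcut J) :=
  if hl : 0 < σ.path.length then
    if hJ : σ.tgt ∈ J then arr k _ (σ.toShortcut hJ hl) else 0
  else vtx k _ σ.start

noncomputable def tailEval : TailModule k J →ₗ[k] Alg k (G.shortcut J) :=
  Finsupp.lsum k fun σ => LinearMap.mulLeft k (tailWeight k J σ)

variable {k J}

@[simp] theorem tailWeight_nil (j : J) : tailWeight k J (Tail.nil j) = vtx k _ j := by
  simp [tailWeight, Tail.nil]

@[simp] theorem tailWeight_ofShortcut (s : (G.shortcut J).E) :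
    tailWeight k J (Tail.ofShortcut s) = arr k _ s := by
  rw [tailWeight]
  split_ifs with hl hJ
  · rfl
  · exact absurd s.2.1.2 hJ
  · exact absurd s.2.2.2.1 hl

theorem tailEval_single (σ : Tail G J) (x : Alg k (G.shortcut J)) :
    tailEval k J (Finsupp.single σ x) = tailWeight k J σ * x :=
  Finsupp.lsum_single _ _ _ _

theorem vtx_mul_tailWeight (j : (G.shortcut J).V) {σ : Tail G J} (hσ : σ.tgt ∈ J) :
    vtx k _ j * tailWeight k J σ = if σ.tgt = j.1 then tailWeight k J σ else 0 := by
  rcases σ.eq_nil_or_eq_ofShortcut hσ with ⟨i, rfl⟩ | ⟨s, rfl⟩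
  · refine (congrArg _ (tailWeight_nil i)).trans ((vtx_mul k (G.shortcut J) j i).trans ?_)
    split_ifs with h₁ h₂ h₂
    · subst h₁; exact (tailWeight_nil j).symm
    · exact absurd (congrArg Subtype.val h₁).symm h₂
    · exact absurd (Subtype.ext h₂.symm) h₁
    · rfl
  · refine (congrArg _ (tailWeight_ofShortcut s)).trans ((vtx_mul_arr k j s).trans ?_)
    split_ifs with h₁ h₂ h₂
    · exact (tailWeight_ofShortcut s).symm
    · exact absurd (congrArg Subtype.val h₁).symm h₂
    · exact absurd (Subtype.ext h₂.symm) h₁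
    · rfl

end TailEval


section EvalCommutes

variable (k : Type) [CommRing k] {G : QuivRel} [Fintype G.V] (J : Set G.V) [Fintype J]

def EvalCommutes (z : Alg k (G.shortcut J)) : Prop :=
  ∀ σ : Tail G J, σ.tgt ∈ J → ∀ x, tailEval k J (tailRep k J (toCorner k J z).1
    (Finsupp.single σ x)) = z * tailEval k J (Finsupp.single σ x)

noncomputable def tailUnit : TailModule k J := ∑ j : J, Finsupp.single (Tail.nil j) 1

variable {k J}

theorem tailEval_tailRep_shortcut (s : (G.shortcut J).E) {σ : Tail G J} (hσ : σ.tgt ∈ J)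
    (x : Alg k (G.shortcut J)) :
    tailEval k J (tailRep k J (pathElt k s.2.2.1) (Finsupp.single σ x)) =
      arr k _ s * tailEval k J (Finsupp.single σ x) := by
  rw [tailEval_single, ← arr_mul_vtx_src, mul_assoc, ← mul_assoc (vtx k (G.shortcut J) _),
    vtx_mul_tailWeight _ hσ]
  split_ifs with hσa
  swap
  · rw [zero_mul, mul_zero, ← (pathElt_mul_vtx k s.2.2.1 s.1.1).trans (if_pos rfl),
      map_mul, Module.End.mul_apply, tailRep_vtx, tailVtx_single,
      if_neg (show ¬ σ.tgt = s.1.1 from hσa), map_zero, map_zero]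
  obtain ⟨f, hf, rest, hrest⟩ := s.2.2.1.exists_eq_cons_concat s.2.2.2.1
  have hchain : ∀ y, tailRep k J (pathElt k rest) (Finsupp.single (Tail.ofArrow s.1 f hf) y) =
      Finsupp.single (Tail.ofShortcut s) y := fun y =>
    (tailRep_pathElt_single _ rest _ _ (hrest ▸ s.2.2.2.2.2) (hrest ▸ s.2.2.2.2.1) y).trans
      (congrArg (Finsupp.single · y) (Tail.mk_eq_mk hrest.symm))
  rw [hrest, pathElt_concat, pathElt_cons, pathElt_nil, map_mul, map_mul, Module.End.mul_apply,
    Module.End.mul_apply, tailRep_arr, tailRep_vtx, tailVtx_single,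
    if_pos (show σ.tgt = s.1.1 from hσa)]
  rcases σ.eq_nil_or_eq_ofShortcut hσ with ⟨j, rfl⟩ | ⟨t, rfl⟩
  · obtain rfl : j = s.1 := Subtype.ext hσa
    rw [tailArr_single_nil s.1 f hf, hchain, tailEval_single, tailWeight_ofShortcut,
      tailWeight_nil, ← mul_assoc]
    exact congrArg (· * x) (arr_mul_vtx_src k s).symm
  · have hts : t.2.1 = s.1 := Subtype.ext hσa
    rw [tailArr_single_ofShortcut t f (hf.trans hσa.symm), Tail.ofArrow_congr hts _ hf]
    split_ifs with hrel
    · have hmem : (t, s) ∈ (G.shortcut J).rel := by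
        rwa [mem_shortcut_rel_iff hts, firstArrow_eq_of_head?_eq (f := f) (by rw [hrest]; simp)]
      rw [map_zero, map_zero, tailWeight_ofShortcut, ← mul_assoc, arr_mul_arr_of_mem_rel k hmem,
        zero_mul]
    · rw [hchain, tailEval_single, tailWeight_ofShortcut, tailWeight_ofShortcut]

omit [Fintype G.V] in
theorem tailVtx_apply_of_ne {v : G.V} (m : TailModule k J) {σ : Tail G J} (h : σ.tgt ≠ v) :
    tailVtx k J v m σ = 0 := by
  induction m using Finsupp.induction_linear with
  | zero => simp
  | add m m' hm hm' => simp [hm, hm']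
  | single τ x =>
    rw [tailVtx_single]
    split_ifs with hτ
    · exact Finsupp.single_eq_of_ne fun he => h (he ▸ hτ)
    · rfl

theorem tailRep_vtxSum_single {σ : Tail G J} (hσ : σ.tgt ∈ J) (x : Alg k (G.shortcut J)) :
    tailRep k J (vtxSum k G J) (Finsupp.single σ x) = Finsupp.single σ x := by
  simp only [vtxSum, map_sum, LinearMap.sum_apply, tailRep_vtx, tailVtx_single]
  rw [Finset.sum_eq_single ⟨σ.tgt, hσ⟩ (fun j _ hj => if_neg fun h => hj (Subtype.ext h.symm))
    (by simp), if_pos rfl]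

theorem tailRep_corner_apply (c : Corner (vtxSum k G J) (vtxSum_idem k G J)) (m : TailModule k J)
    {σ : Tail G J} (hσ : σ.tgt ∉ J) : tailRep k J c.1 m σ = 0 := by
  rw [← c.2.1, map_mul, Module.End.mul_apply]
  simp only [vtxSum, map_sum, LinearMap.sum_apply, tailRep_vtx, Finsupp.finsetSum_apply]
  exact Finset.sum_eq_zero fun j _ => tailVtx_apply_of_ne _ fun h => hσ (h ▸ j.2)

theorem EvalCommutes.tailEval_tailRep {z : Alg k (G.shortcut J)} (hz : EvalCommutes k J z)
    (m : TailModule k J) (hm : ∀ σ ∈ m.support, σ.tgt ∈ J) :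
    tailEval k J (tailRep k J (toCorner k J z).1 m) = z * tailEval k J m := by
  rw [← m.sum_single, map_finsuppSum, map_finsuppSum, map_finsuppSum, Finsupp.mul_sum]
  exact Finsupp.sum_congr fun σ hσ => hz σ (hm σ hσ) (m σ)

theorem evalCommutes_algebraMap (c : k) : EvalCommutes k J (algebraMap k _ c) := by
  intro σ hσ x
  rw [Algebra.algebraMap_eq_smul_one, map_smul, map_one]
  change tailEval k J (tailRep k J (c • vtxSum k G J) _) = _
  rw [map_smul, LinearMap.smul_apply, tailRep_vtxSum_single hσ, map_smul, smul_mul_assoc,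
    one_mul]

theorem EvalCommutes.add {z₁ z₂ : Alg k (G.shortcut J)} (h₁ : EvalCommutes k J z₁)
    (h₂ : EvalCommutes k J z₂) : EvalCommutes k J (z₁ + z₂) := by
  intro σ hσ x
  have h : (toCorner k J (z₁ + z₂)).1 = (toCorner k J z₁).1 + (toCorner k J z₂).1 :=
    congrArg Subtype.val (map_add (toCorner k J) z₁ z₂)
  rw [h, map_add, LinearMap.add_apply, map_add, h₁ σ hσ x, h₂ σ hσ x, add_mul]

theorem EvalCommutes.mul {z₁ z₂ : Alg k (G.shortcut J)} (h₁ : EvalCommutes k J z₁)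
    (h₂ : EvalCommutes k J z₂) : EvalCommutes k J (z₁ * z₂) := by
  intro σ hσ x
  have h : (toCorner k J (z₁ * z₂)).1 = (toCorner k J z₁).1 * (toCorner k J z₂).1 :=
    congrArg Subtype.val (map_mul (toCorner k J) z₁ z₂)
  rw [h, map_mul, Module.End.mul_apply, h₁.tailEval_tailRep _ fun τ hτ => by_contra fun h =>
    Finsupp.mem_support_iff.mp hτ (tailRep_corner_apply _ _ h), h₂ σ hσ x, mul_assoc]

theorem evalCommutes_vtx (j : (G.shortcut J).V) : EvalCommutes k J (vtx k _ j) := by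
  intro σ hσ x
  have h : (toCorner k J (vtx k _ j)).1 = vtx k G j.1 :=
    (congrArg Subtype.val (toCorner_vtx k J j)).trans (pathElt_nil k _)
  rw [h, tailRep_vtx, tailVtx_single, tailEval_single, ← mul_assoc,
    vtx_mul_tailWeight j hσ]
  split_ifs <;> simp [tailEval_single]

theorem evalCommutes_arr (s : (G.shortcut J).E) : EvalCommutes k J (arr k _ s) := by
  intro σ hσ x
  rw [congrArg Subtype.val (toCorner_arr k J s)]
  exact tailEval_tailRep_shortcut s hσ x

theorem evalCommutes (z : Alg k (G.shortcut J)) : EvalCommutes k J z :=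
  Alg.induction k _ evalCommutes_vtx evalCommutes_arr evalCommutes_algebraMap
    (fun _ _ => EvalCommutes.add) (fun _ _ => EvalCommutes.mul) z

theorem tailEval_tailRep_tailUnit (z : Alg k (G.shortcut J)) :
    tailEval k J (tailRep k J (toCorner k J z).1 (tailUnit k J)) = z := by
  rw [(evalCommutes z).tailEval_tailRep _ fun σ hσ => ?_, tailUnit, map_sum]
  · simp only [tailEval_single, tailWeight_nil, mul_one]
    exact (congrArg (z * ·) (sum_vtx k (G.shortcut J))).trans (mul_one z)
  · rw [Finsupp.mem_support_iff, tailUnit, Finsupp.finsetSum_apply] at hσ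
    obtain ⟨j, -, hj⟩ := Finset.exists_ne_zero_of_sum_ne_zero hσ
    obtain rfl := (Finsupp.single_apply_ne_zero.mp hj).1
    exact j.2

theorem toCorner_injective : Function.Injective (toCorner k J) := fun z z' h => by
  rw [← tailEval_tailRep_tailUnit z, h, tailEval_tailRep_tailUnit]

end EvalCommutes

end QuivRel

theorem shortcut_algebra_gentle_and_iso_corner_general
    (k : Type) [Field k]
    (G : QuivRel) [Fintype G.V] (hG : G.IsGentle) (J : Set G.V) [Fintype J] :
    (G.shortcut J).IsGentle ∧
    Nonempty (QuivRel.Alg k (G.shortcut J) ≃ₐ[k]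
      Corner (QuivRel.vtxSum k G J) (QuivRel.vtxSum_idem k G J)) :=
  ⟨hG.shortcut J, ⟨AlgEquiv.ofBijective (QuivRel.toCorner k J)
    ⟨QuivRel.toCorner_injective, QuivRel.toCorner_surjective k J⟩⟩⟩

/-- **Proposition** (Pilaud–Plamondon–Stella, Section 4).
Let `G` be a gentle quiver with relations over an algebraically closed field `k` and `J` a
subset of its vertices.  Then the path algebra with relations `kQ_J/I_J` of the shortcut
quiver `G_J` is gentle, and it is isomorphic as a `k`-algebra to the corner algebra
`e_J (kQ/I) e_J`, where `e_J` is the sum of the primitive idempotents of `kQ/I` attached to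
the vertices in `J`. -/
theorem shortcut_algebra_gentle_and_iso_corner
    (k : Type) [Field k] [IsAlgClosed k]
    (G : QuivRel) [Fintype G.V] (hG : G.IsGentle) (J : Set G.V) [Fintype J] :
    (G.shortcut J).IsGentle ∧
    Nonempty (QuivRel.Alg k (G.shortcut J) ≃ₐ[k]
      Corner (QuivRel.vtxSum k G J) (QuivRel.vtxSum_idem k G J)) :=
  shortcut_algebra_gentle_and_iso_corner_general k G hG J
end

section
/- Let D∘ ⊂ D∘' be two nested dissections of the polygon P∘. Then every D∘-accordion diagonal of P• is also a D∘'-accordion diagonal of P•. -/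
/-!
Combinatorics of dissections of a convex polygon, following Pilaud–Plamondon–Stella,
"A τ-tilting approach to dissections of polygons".

We fix `2m` points on the unit circle, alternately colored white and black.  The white points
are labelled by `ZMod m` (the white point `i` sitting at angle `2πi/m`), and the black points
are labelled by `ZMod m` as well (the black point `i` sitting between the white points `i` and
`i + 1`).  `P∘` (resp. `P•`) is the convex polygon with white (resp. black) vertices.  Segments
between points of the same color are encoded as unordered pairs `Sym2 (ZMod m)` of labels.
-/

open scoped Classical

/-- The point `x` lies strictly inside the counterclockwise arc from `a` to `b`
(all three points of the same color). -/
def wbtw (m : ℕ) (a x b : ZMod m) : Prop := (x - a).val < (b - a).val ∧ x ≠ a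

/-- The black point `i` (between the white points `i` and `i+1`) lies strictly inside the
counterclockwise arc from the white point `a` to the white point `b`. -/
def bbtw (m : ℕ) (a : ZMod m) (i : ZMod m) (b : ZMod m) : Prop := (i - a).val < (b - a).val

/-- `p` is a diagonal of the polygon: its endpoints are distinct and non-consecutive. -/
def IsDiag (m : ℕ) (p : Sym2 (ZMod m)) : Prop :=
  ∀ a b, p = s(a, b) → a ≠ b ∧ b ≠ a + 1 ∧ a ≠ b + 1

/-- Two segments with endpoints of the same color cross (all four endpoints are distinct, and
exactly one endpoint of the second lies strictly inside each of the two arcs determined by the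
first). -/
def Cross (m : ℕ) (p q : Sym2 (ZMod m)) : Prop :=
  ∀ a b c d, p = s(a, b) → q = s(c, d) →
    (a ≠ c ∧ a ≠ d ∧ b ≠ c ∧ b ≠ d) ∧ (wbtw m a c b ↔ ¬ wbtw m a d b)

/-- The black segment `q` crosses the white segment `p`: exactly one endpoint of `q` lies
strictly inside each of the two arcs determined by `p`. -/
def BWCross (m : ℕ) (q p : Sym2 (ZMod m)) : Prop :=
  ∀ i j a b, q = s(i, j) → p = s(a, b) → (bbtw m a i b ↔ ¬ bbtw m a j b)

/-- A dissection of the white polygon `P∘`: a set of pairwise non-crossing diagonals. -/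
def IsDissection (m : ℕ) (D : Finset (Sym2 (ZMod m))) : Prop :=
  (∀ p ∈ D, IsDiag m p) ∧ ∀ p ∈ D, ∀ q ∈ D, ¬ Cross m p q

/-- `b` is the counterclockwise successor of `a` among the elements of `C`. -/
def nextIn (m : ℕ) (C : Finset (ZMod m)) (a b : ZMod m) : Prop :=
  a ∈ C ∧ b ∈ C ∧ a ≠ b ∧ ∀ x ∈ C, ¬ wbtw m a x b

/-- `C` (a set of white vertices) is a cell of the dissection `D`: it has at least three
vertices, any two cyclically consecutive vertices of `C` are joined by a boundary edge of the
polygon or by a diagonal of `D`, and no diagonal of `D` joins two non-consecutive vertices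
of `C`. -/
def IsCell (m : ℕ) (D : Finset (Sym2 (ZMod m))) (C : Finset (ZMod m)) : Prop :=
  3 ≤ C.card ∧
  (∀ a b, nextIn m C a b → (b = a + 1 ∨ s(a, b) ∈ D)) ∧
  (∀ p ∈ D, ∀ a b, p = s(a, b) → a ∈ C → b ∈ C → (nextIn m C a b ∨ nextIn m C b a))

/-- `p` is an edge of the cell `C` (either a boundary edge of the polygon or a diagonal of the
dissection). -/
def IsCellEdge (m : ℕ) (C : Finset (ZMod m)) (p : Sym2 (ZMod m)) : Prop :=
  ∃ a b, p = s(a, b) ∧ nextIn m C a b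

/-- `q` (a diagonal of the black polygon `P•`) is a `D`-accordion diagonal: it crosses either
none or exactly two consecutive edges (i.e., two edges sharing a vertex) of every cell
of `D`. -/
def IsAccordionDiag (m : ℕ) (D : Finset (Sym2 (ZMod m))) (q : Sym2 (ZMod m)) : Prop :=
  IsDiag m q ∧ ∀ C, IsCell m D C →
    (∀ p, IsCellEdge m C p → ¬ BWCross m q p) ∨
    (∃ p₁ p₂, p₁ ≠ p₂ ∧ IsCellEdge m C p₁ ∧ IsCellEdge m C p₂ ∧
      BWCross m q p₁ ∧ BWCross m q p₂ ∧ (∃ v, v ∈ p₁ ∧ v ∈ p₂) ∧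
      ∀ p, IsCellEdge m C p → BWCross m q p → (p = p₁ ∨ p = p₂))

/-- A `D`-accordion dissection: a set of pairwise non-crossing `D`-accordion diagonals. -/
def IsAccordionDissection (m : ℕ) (D : Finset (Sym2 (ZMod m))) (s : Finset (Sym2 (ZMod m))) :
    Prop :=
  (∀ q ∈ s, IsAccordionDiag m D q) ∧ ∀ q ∈ s, ∀ q' ∈ s, ¬ Cross m q q'

/-- In the two cells of `D` adjacent to the white diagonal `δ∘ = s(a,b)`, the other edge
crossed by the black diagonal `δ•` in the cell `C` contains the white vertex `v`. -/
def OtherCrossedEdgeAt (m : ℕ) (δbull : Sym2 (ZMod m)) (δcirc : Sym2 (ZMod m))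
    (C : Finset (ZMod m)) (v : ZMod m) : Prop :=
  ∃ p, IsCellEdge m C p ∧ p ≠ δcirc ∧ BWCross m δbull p ∧ v ∈ p

/-- The three edges crossed by `δ•` in the two cells of `D` containing `δ∘` form a `Z`. -/
def ZShape (m : ℕ) (D : Finset (Sym2 (ZMod m))) (δcirc δbull : Sym2 (ZMod m)) : Prop :=
  ∃ a b, δcirc = s(a, b) ∧ BWCross m δbull δcirc ∧
    ∃ C₁ C₂, IsCell m D C₁ ∧ IsCell m D C₂ ∧ nextIn m C₁ b a ∧ nextIn m C₂ a b ∧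
      OtherCrossedEdgeAt m δbull δcirc C₁ a ∧ OtherCrossedEdgeAt m δbull δcirc C₂ b

/-- The three edges crossed by `δ•` in the two cells of `D` containing `δ∘` form an `S`. -/
def SShape (m : ℕ) (D : Finset (Sym2 (ZMod m))) (δcirc δbull : Sym2 (ZMod m)) : Prop :=
  ∃ a b, δcirc = s(a, b) ∧ BWCross m δbull δcirc ∧
    ∃ C₁ C₂, IsCell m D C₁ ∧ IsCell m D C₂ ∧ nextIn m C₁ b a ∧ nextIn m C₂ a b ∧
      OtherCrossedEdgeAt m δbull δcirc C₁ b ∧ OtherCrossedEdgeAt m δbull δcirc C₂ a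

/-- The `δ∘`-coordinate `ε(δ∘ ∈ D, δ•)` of the `g`-vector of the black diagonal `δ•` with
respect to the dissection `D`: it is `1`, `-1` or `0` according to whether the three edges
crossed by `δ•` in the two cells of `D` containing `δ∘` form a `Z`, an `S` or a `V` (and `0`
if `δ•` does not cross `δ∘`). -/
noncomputable def gvec (m : ℕ) (D : Finset (Sym2 (ZMod m))) (δbull : Sym2 (ZMod m))
    (δcirc : Sym2 (ZMod m)) : ℤ :=
  if ZShape m D δcirc δbull then 1 else if SShape m D δcirc δbull then -1 else 0

/-!
Every cell of `D'` lies inside a cell of `D`: deleting the diagonals of `D' \ D` one at a time, a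
cell bounded by a deleted diagonal `s(e, f)` absorbs the vertices between `e` and `f` that no
remaining diagonal hides from `s(e, f)`, and the result is a cell of the smaller dissection.
On the other hand, a black diagonal crosses no edge or exactly two consecutive edges of a cell iff
it cuts off at most one vertex of the cell, and this passes from a cell to any subset of at least
three of its vertices.
-/

def ccwDist (m : ℕ) (o x : ZMod m) : ℕ := (x - o).val

lemma ccwDist_self {m : ℕ} (o : ZMod m) : ccwDist m o o = 0 := by simp [ccwDist]

section CyclicPosition

variable {m : ℕ} [NeZero m]

lemma ccwDist_lt (o x : ZMod m) : ccwDist m o x < m := ZMod.val_lt _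

lemma ccwDist_inj (o : ZMod m) {x y : ZMod m} : ccwDist m o x = ccwDist m o y ↔ x = y :=
  (ZMod.val_injective m).eq_iff.trans sub_left_inj

lemma ccwDist_ne_ccwDist (o : ZMod m) {x y : ZMod m} :
    ccwDist m o x ≠ ccwDist m o y ↔ x ≠ y :=
  (ccwDist_inj o).not

lemma val_sub_eq_ccwDist (o x y : ZMod m) :
    (x - y).val = if ccwDist m o y ≤ ccwDist m o x then ccwDist m o x - ccwDist m o y
      else ccwDist m o x + m - ccwDist m o y := by
  have hx := ccwDist_lt o x
  have hy := ccwDist_lt o y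
  have hval : (x - y).val = (ccwDist m o x + m - ccwDist m o y) % m := by
    rw [← ZMod.val_natCast, Nat.cast_sub (by omega), Nat.cast_add, ZMod.natCast_self, add_zero,
      ccwDist, ccwDist, ZMod.natCast_zmod_val, ZMod.natCast_zmod_val, sub_sub_sub_cancel_right]
  split_ifs with h
  · rw [hval, show ccwDist m o x + m - ccwDist m o y = ccwDist m o x - ccwDist m o y + m by omega,
      Nat.add_mod_right, Nat.mod_eq_of_lt (by omega)]
  · rw [hval, Nat.mod_eq_of_lt (by omega)]

lemma ccwDist_add_one (o x : ZMod m) :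
    (ccwDist m o x + 1 < m ∧ ccwDist m o (x + 1) = ccwDist m o x + 1) ∨
      (ccwDist m o x + 1 = m ∧ ccwDist m o (x + 1) = 0) := by
  have h := val_sub_eq_ccwDist o (x + 1) x
  rw [add_sub_cancel_left, ZMod.val_one_eq_one_mod] at h
  have hx := ccwDist_lt o x
  have hx1 := ccwDist_lt o (x + 1)
  rcases Nat.lt_or_ge 1 m with hm | hm
  · rw [Nat.mod_eq_of_lt hm] at h
    split_ifs at h <;> omega
  · omega

lemma ccwDist_add_one_self (k : ZMod m) : ccwDist m (k + 1) k = m - 1 := by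
  have := ccwDist_add_one (k + 1) k
  have := ccwDist_self (k + 1)
  omega

lemma bbtw_iff_ccwDist (o a k b : ZMod m) :
    bbtw m a k b ↔ (ccwDist m o a ≤ ccwDist m o k ∧ ccwDist m o k < ccwDist m o b) ∨
      (ccwDist m o b < ccwDist m o a ∧ ccwDist m o a ≤ ccwDist m o k) ∨
      (ccwDist m o b < ccwDist m o a ∧ ccwDist m o k < ccwDist m o b) := by
  have := ccwDist_lt o a
  have := ccwDist_lt o b
  have := ccwDist_lt o k
  rw [bbtw, val_sub_eq_ccwDist o, val_sub_eq_ccwDist o]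
  split_ifs <;> omega

lemma wbtw_iff_ccwDist (o a x b : ZMod m) :
    wbtw m a x b ↔ ((ccwDist m o a ≤ ccwDist m o x ∧ ccwDist m o x < ccwDist m o b) ∨
      (ccwDist m o b < ccwDist m o a ∧ ccwDist m o a ≤ ccwDist m o x) ∨
      (ccwDist m o b < ccwDist m o a ∧ ccwDist m o x < ccwDist m o b)) ∧
      ccwDist m o x ≠ ccwDist m o a := by
  rw [wbtw, ← bbtw, bbtw_iff_ccwDist o, ccwDist_ne_ccwDist o]

end CyclicPosition

lemma exists_nextIn_right {m : ℕ} {C : Finset (ZMod m)} {a : ZMod m} (ha : a ∈ C)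
    (hC : 2 ≤ C.card) : ∃ b, nextIn m C a b := by
  have hne : (C.erase a).Nonempty := by
    rw [← Finset.card_pos, Finset.card_erase_of_mem ha]; omega
  obtain ⟨b, hb, hmin⟩ := (C.erase a).exists_min_image (ccwDist m a) hne
  refine ⟨b, ha, Finset.mem_of_mem_erase hb, (Finset.ne_of_mem_erase hb).symm, ?_⟩
  rintro x hx ⟨hlt, hxa⟩
  exact absurd (hmin x (Finset.mem_erase.2 ⟨hxa, hx⟩)) (not_le.2 hlt)

section CellOrder

variable {m : ℕ} [NeZero m] {C : Finset (ZMod m)}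

lemma nextIn_right_unique {a b b' : ZMod m} (h : nextIn m C a b) (h' : nextIn m C a b') :
    b = b' := by
  have w := h.2.2.2 b' h'.2.1
  have w' := h'.2.2.2 b h.2.1
  have hb := (ccwDist_ne_ccwDist a).2 h.2.2.1
  have hb' := (ccwDist_ne_ccwDist a).2 h'.2.2.1
  rw [wbtw_iff_ccwDist a] at w w'
  rw [← ccwDist_inj a]
  have := ccwDist_self a
  omega

lemma nextIn_left_unique {a a' b : ZMod m} (h : nextIn m C a b) (h' : nextIn m C a' b) :
    a = a' := by
  have w := h.2.2.2 a' h'.1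
  have w' := h'.2.2.2 a h.1
  have ha := (ccwDist_ne_ccwDist b).2 h.2.2.1
  have ha' := (ccwDist_ne_ccwDist b).2 h'.2.2.1
  rw [wbtw_iff_ccwDist b] at w w'
  rw [← ccwDist_inj b]
  have := ccwDist_self b
  have := ccwDist_lt b a
  have := ccwDist_lt b a'
  omega

lemma exists_nextIn_left {b : ZMod m} (hb : b ∈ C) (hC : 2 ≤ C.card) :
    ∃ a, nextIn m C a b := by
  have hne : (C.erase b).Nonempty := by
    rw [← Finset.card_pos, Finset.card_erase_of_mem hb]; omega
  obtain ⟨a, ha, hmax⟩ := (C.erase b).exists_max_image (ccwDist m b) hne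
  have hab := Finset.ne_of_mem_erase ha
  refine ⟨a, Finset.mem_of_mem_erase ha, hb, hab, fun x hx hw => ?_⟩
  rcases eq_or_ne x b with rfl | hxb
  · exact lt_irrefl _ hw.1
  have := hmax x (Finset.mem_erase.2 ⟨hxb, hx⟩)
  rw [wbtw_iff_ccwDist b] at hw
  have := (ccwDist_ne_ccwDist b).2 hxb
  have := (ccwDist_ne_ccwDist b).2 hab
  have := ccwDist_self b
  omega

lemma nextIn_asymm (hC : 3 ≤ C.card) {a b : ZMod m} (h : nextIn m C a b) : ¬ nextIn m C b a := by
  intro h'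
  obtain ⟨x, hx, hxab⟩ : ∃ x ∈ C, x ≠ a ∧ x ≠ b := by
    by_contra! hsub
    have : C ⊆ {a, b} := fun x hx => by
      by_cases hxa : x = a
      · simp [hxa]
      · simp [hsub x hx hxa]
    have := (Finset.card_le_card this).trans (Finset.card_insert_le a {b})
    simp only [Finset.card_singleton] at this
    omega
  have w := h.2.2.2 x hx
  have w' := h'.2.2.2 x hx
  rw [wbtw_iff_ccwDist a] at w w'
  have := (ccwDist_ne_ccwDist a).2 h.2.2.1
  have := (ccwDist_ne_ccwDist a).2 hxab.1
  have := (ccwDist_ne_ccwDist a).2 hxab.2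
  have := ccwDist_self a
  have := ccwDist_lt a b
  have := ccwDist_lt a x
  omega

end CellOrder

section BlackDiagonal

variable {m : ℕ} [NeZero m]

/-- The white point `x` lies among `i + 1, …, j`, the white vertices on the counterclockwise
side of the black chord `s(i, j)`. -/
def InArc (m : ℕ) (i j x : ZMod m) : Prop := ccwDist m (i + 1) x ≤ ccwDist m (i + 1) j

lemma bwCross_iff_inArc (i j a b : ZMod m) :
    BWCross m s(i, j) s(a, b) ↔ (InArc m i j a ↔ ¬ InArc m i j b) := by
  have key : ∀ a b,
      (bbtw m a i b ↔ ¬ bbtw m a j b) ↔ (InArc m i j a ↔ ¬ InArc m i j b) := by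
    intro a b
    rw [bbtw_iff_ccwDist (i + 1), bbtw_iff_ccwDist (i + 1), InArc, InArc, ccwDist_add_one_self]
    have := ccwDist_lt (i + 1) a
    have := ccwDist_lt (i + 1) b
    have := ccwDist_lt (i + 1) j
    omega
  refine ⟨fun h => (key a b).1 (h i j a b rfl rfl), fun h i' j' a' b' hq hp => ?_⟩
  have hab := (key a b).2 h
  have hba := (key b a).2 (by tauto)
  rcases Sym2.eq_iff.1 hq with ⟨rfl, rfl⟩ | ⟨rfl, rfl⟩ <;>
    rcases Sym2.eq_iff.1 hp with ⟨rfl, rfl⟩ | ⟨rfl, rfl⟩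
  exacts [hab, hba, iff_not_comm.1 hab, iff_not_comm.1 hba]

end BlackDiagonal

def AccordionAt (m : ℕ) (C : Finset (ZMod m)) (q : Sym2 (ZMod m)) : Prop :=
  (∀ p, IsCellEdge m C p → ¬ BWCross m q p) ∨
    (∃ p₁ p₂, p₁ ≠ p₂ ∧ IsCellEdge m C p₁ ∧ IsCellEdge m C p₂ ∧
      BWCross m q p₁ ∧ BWCross m q p₂ ∧ (∃ v, v ∈ p₁ ∧ v ∈ p₂) ∧
      ∀ p, IsCellEdge m C p → BWCross m q p → (p = p₁ ∨ p = p₂))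

lemma AccordionAt.exists_mem_of_bwCross {m : ℕ} {C : Finset (ZMod m)} {q p p' : Sym2 (ZMod m)}
    (h : AccordionAt m C q) (hp : IsCellEdge m C p) (hp' : IsCellEdge m C p') (hne : p ≠ p')
    (hq : BWCross m q p) (hq' : BWCross m q p') : ∃ v, v ∈ p ∧ v ∈ p' := by
  rcases h with h | ⟨p₁, p₂, -, -, -, -, -, ⟨v, hv₁, hv₂⟩, hmax⟩
  · exact absurd hq (h p hp)
  rcases hmax p hp hq with rfl | rfl <;> rcases hmax p' hp' hq' with rfl | rfl
  exacts [absurd rfl hne, ⟨v, hv₁, hv₂⟩, ⟨v, hv₂, hv₁⟩, absurd rfl hne]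

section Accordion

variable {m : ℕ} [NeZero m] {C : Finset (ZMod m)}

lemma accordionAt_of_exists (hC : 3 ≤ C.card) {q : Sym2 (ZMod m)} (P : ZMod m → Prop)
    (hP : ∀ a b, BWCross m q s(a, b) ↔ (P a ↔ ¬ P b))
    (hs : ∀ x ∈ C, ∀ y ∈ C, P x → P y → x = y) {v : ZMod m} (hvC : v ∈ C)
    (hPv : P v) : AccordionAt m C q := by
  obtain ⟨u, hu⟩ := exists_nextIn_left hvC (by omega)
  obtain ⟨w, hw⟩ := exists_nextIn_right hvC (by omega)
  have hPu : ¬ P u := fun h => hu.2.2.1 (hs u hu.1 v hvC h hPv)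
  have hPw : ¬ P w := fun h => hw.2.2.1 (hs v hvC w hw.2.1 hPv h)
  refine .inr ⟨s(u, v), s(v, w), ?_, ⟨u, v, rfl, hu⟩, ⟨v, w, rfl, hw⟩,
    (hP u v).2 (by tauto), (hP v w).2 (by tauto),
    ⟨v, Sym2.mem_mk_right u v, Sym2.mem_mk_left v w⟩, ?_⟩
  · intro huw
    rcases Sym2.eq_iff.1 huw with ⟨huv, -⟩ | ⟨rfl, -⟩
    · exact hu.2.2.1 huv
    · exact nextIn_asymm hC hu hw
  · rintro p ⟨a, b, rfl, hab⟩ hq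
    have hPab := (hP a b).1 hq
    by_cases hPa : P a
    · obtain rfl := hs a hab.1 v hvC hPa hPv
      exact .inr (by rw [nextIn_right_unique hab hw])
    · obtain rfl := hs b hab.2.1 v hvC (by tauto) hPv
      exact .inl (by rw [nextIn_left_unique hab hu])

lemma accordionAt_of_subsingleton (hC : 3 ≤ C.card) {q : Sym2 (ZMod m)} (P : ZMod m → Prop)
    (hP : ∀ a b, BWCross m q s(a, b) ↔ (P a ↔ ¬ P b))
    (hs : ∀ x ∈ C, ∀ y ∈ C, P x → P y → x = y) : AccordionAt m C q := by
  by_cases hv : ∃ v ∈ C, P v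
  · obtain ⟨v, hvC, hPv⟩ := hv
    exact accordionAt_of_exists hC P hP hs hvC hPv
  push Not at hv
  refine .inl ?_
  rintro p ⟨a, b, rfl, hab⟩ hq
  have := hv a hab.1
  have := hv b hab.2.1
  exact absurd ((hP a b).1 hq) (by tauto)

lemma exists_nextIn_across {i j : ZMod m} {x y z w : ZMod m} (hx : x ∈ C) (hy : y ∈ C)
    (hz : z ∈ C) (hw : w ∈ C) (hxA : InArc m i j x) (hyA : InArc m i j y) (hxy : x ≠ y)
    (hzA : ¬ InArc m i j z) (hwA : ¬ InArc m i j w) (hzw : z ≠ w) :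
    ∃ a b c d, nextIn m C a b ∧ nextIn m C c d ∧ InArc m i j a ∧ ¬ InArc m i j b ∧
      ¬ InArc m i j c ∧ InArc m i j d ∧ a ≠ d ∧ b ≠ c := by
  set o := i + 1
  set J := ccwDist m o j
  have hin : ∀ x, InArc m i j x ↔ ccwDist m o x ≤ J := fun x => Iff.rfl
  have hS : (C.filter (InArc m i j)).Nonempty := ⟨x, Finset.mem_filter.2 ⟨hx, hxA⟩⟩
  have hT : (C.filter (¬ InArc m i j ·)).Nonempty := ⟨z, Finset.mem_filter.2 ⟨hz, hzA⟩⟩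
  obtain ⟨a, ha, hamax⟩ := (C.filter (InArc m i j)).exists_max_image (ccwDist m o) hS
  obtain ⟨d, hd, hdmin⟩ := (C.filter (InArc m i j)).exists_min_image (ccwDist m o) hS
  obtain ⟨b, hb, hbmin⟩ := (C.filter (¬ InArc m i j ·)).exists_min_image (ccwDist m o) hT
  obtain ⟨c, hc, hcmax⟩ := (C.filter (¬ InArc m i j ·)).exists_max_image (ccwDist m o) hT
  have hpos : ∀ x ∈ C, (InArc m i j x ∧ ccwDist m o d ≤ ccwDist m o x ∧
      ccwDist m o x ≤ ccwDist m o a) ∨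
      (¬ InArc m i j x ∧ ccwDist m o b ≤ ccwDist m o x ∧
        ccwDist m o x ≤ ccwDist m o c) := by
    intro x hx
    by_cases hxA : InArc m i j x
    · have hx' := Finset.mem_filter.2 ⟨hx, hxA⟩
      exact .inl ⟨hxA, hdmin x hx', hamax x hx'⟩
    · have hx' : x ∈ C.filter (¬ InArc m i j ·) := Finset.mem_filter.2 ⟨hx, hxA⟩
      exact .inr ⟨hxA, hbmin x hx', hcmax x hx'⟩
  rw [Finset.mem_filter] at ha hd hb hc
  simp only [hin] at ha hd hb hc hpos hxA hyA hzA hwA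
  have := (ccwDist_ne_ccwDist o).2 hxy
  have := (ccwDist_ne_ccwDist o).2 hzw
  have := hpos x hx
  have := hpos y hy
  have := hpos z hz
  have := hpos w hw
  refine ⟨a, b, c, d, ?_, ?_, ha.2, hb.2, hc.2, hd.2, (ccwDist_ne_ccwDist o).1 (by omega),
    (ccwDist_ne_ccwDist o).1 (by omega)⟩
  · refine ⟨ha.1, hb.1, (ccwDist_ne_ccwDist o).1 (by omega), fun x hx hw => ?_⟩
    rw [wbtw_iff_ccwDist o] at hw
    have := hpos x hx
    omega
  · refine ⟨hc.1, hd.1, (ccwDist_ne_ccwDist o).1 (by omega), fun x hx hw => ?_⟩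
    rw [wbtw_iff_ccwDist o] at hw
    have := hpos x hx
    omega

lemma subsingleton_of_accordionAt {i j : ZMod m} (h : AccordionAt m C s(i, j)) :
    (∀ x ∈ C, ∀ y ∈ C, InArc m i j x → InArc m i j y → x = y) ∨
      (∀ x ∈ C, ∀ y ∈ C, ¬ InArc m i j x → ¬ InArc m i j y → x = y) := by
  by_contra! hcon
  obtain ⟨⟨x, hx, y, hy, hxA, hyA, hxy⟩, ⟨z, hz, w, hw, hzA, hwA, hzw⟩⟩ := hcon
  obtain ⟨a, b, c, d, hab, hcd, ha, hb, hc, hd, had, hbc⟩ :=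
    exists_nextIn_across hx hy hz hw hxA hyA hxy hzA hwA hzw
  have hne : s(a, b) ≠ s(c, d) := by
    rintro h
    rcases Sym2.eq_iff.1 h with ⟨rfl, -⟩ | ⟨rfl, -⟩
    exacts [hc ha, had rfl]
  obtain ⟨v, hv, hv'⟩ := h.exists_mem_of_bwCross ⟨a, b, rfl, hab⟩ ⟨c, d, rfl, hcd⟩ hne
    ((bwCross_iff_inArc i j a b).2 (by tauto)) ((bwCross_iff_inArc i j c d).2 (by tauto))
  rw [Sym2.mem_iff] at hv hv'
  rcases hv with rfl | rfl <;> rcases hv' with rfl | rfl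
  exacts [hc ha, had rfl, hbc rfl, hb hd]

lemma accordionAt_iff (hC : 3 ≤ C.card) (i j : ZMod m) :
    AccordionAt m C s(i, j) ↔
      (∀ x ∈ C, ∀ y ∈ C, InArc m i j x → InArc m i j y → x = y) ∨
        (∀ x ∈ C, ∀ y ∈ C, ¬ InArc m i j x → ¬ InArc m i j y → x = y) := by
  refine ⟨subsingleton_of_accordionAt, fun h => h.elim (accordionAt_of_subsingleton hC _ ?_)
    (accordionAt_of_subsingleton hC _ ?_)⟩
  · exact bwCross_iff_inArc i j
  · intro a b
    rw [bwCross_iff_inArc]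
    tauto

lemma AccordionAt.mono {C₀ : Finset (ZMod m)} {q : Sym2 (ZMod m)} (h : AccordionAt m C q)
    (hC : 3 ≤ C.card) (hC₀ : 3 ≤ C₀.card) (hsub : C₀ ⊆ C) : AccordionAt m C₀ q := by
  induction q using Sym2.ind with
  | _ i j =>
    rw [accordionAt_iff hC] at h
    rw [accordionAt_iff hC₀]
    exact h.imp (fun h x hx y hy => h x (hsub hx) y (hsub hy))
      (fun h x hx y hy => h x (hsub hx) y (hsub hy))

end Accordion

lemma IsDissection.subset {m : ℕ} {D D' : Finset (Sym2 (ZMod m))} (h : IsDissection m D')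
    (hsub : D ⊆ D') : IsDissection m D :=
  ⟨fun p hp => h.1 p (hsub hp), fun p hp p' hp' => h.2 p (hsub hp) p' (hsub hp')⟩

section Merge

variable {m : ℕ} [NeZero m]

lemma cross_of_ccwDist_lt (o : ZMod m) {a b c d : ZMod m} (hac : ccwDist m o a < ccwDist m o c)
    (hcb : ccwDist m o c < ccwDist m o b) (hbd : ccwDist m o b < ccwDist m o d) :
    Cross m s(a, b) s(c, d) := by
  have key : ∀ x y, (x = a ∧ y = b) ∨ (x = b ∧ y = a) →
      ∀ z w, (z = c ∧ w = d) ∨ (z = d ∧ w = c) →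
        (x ≠ z ∧ x ≠ w ∧ y ≠ z ∧ y ≠ w) ∧ (wbtw m x z y ↔ ¬ wbtw m x w y) := by
    rintro x y hxy z w hzw
    simp only [← ccwDist_ne_ccwDist o, wbtw_iff_ccwDist o]
    have := ccwDist_lt o d
    rcases hxy with ⟨rfl, rfl⟩ | ⟨rfl, rfl⟩ <;>
      rcases hzw with ⟨rfl, rfl⟩ | ⟨rfl, rfl⟩ <;> omega
  intro x y z w hxy hzw
  exact key x y (Sym2.eq_iff.1 hxy.symm) z w (Sym2.eq_iff.1 hzw.symm)

lemma ccwDist_of_nextIn {C : Finset (ZMod m)} {e f x : ZMod m} (hef : nextIn m C e f)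
    (hx : x ∈ C) : ccwDist m e x = 0 ∨ ccwDist m e f ≤ ccwDist m e x := by
  have hw := hef.2.2.2 x hx
  rw [wbtw_iff_ccwDist e] at hw
  have := ccwDist_self e
  omega

/-- Removing the diagonal `s(e, f)` glues the cell `C₀` (lying on the arc from `f` to `e`) to the
cell on the other side of `s(e, f)`; the vertices of the latter strictly between `e` and `f` are
those that no diagonal of `D` hides from `s(e, f)`. -/
def VisibleAcross (m : ℕ) (D : Finset (Sym2 (ZMod m))) (e f x : ZMod m) : Prop :=
  wbtw m e x f ∧
    ∀ u v, s(u, v) ∈ D → ¬ (wbtw m u x v ∧ ¬ wbtw m u e v ∧ ¬ wbtw m u f v)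

noncomputable def mergeCell (m : ℕ) [NeZero m] (D : Finset (Sym2 (ZMod m))) (e f : ZMod m)
    (C₀ : Finset (ZMod m)) : Finset (ZMod m) :=
  C₀ ∪ Finset.univ.filter (VisibleAcross m D e f)

variable {D : Finset (Sym2 (ZMod m))} {e f : ZMod m} {C₀ : Finset (ZMod m)}

lemma mem_mergeCell {x : ZMod m} :
    x ∈ mergeCell m D e f C₀ ↔ x ∈ C₀ ∨ VisibleAcross m D e f x := by
  simp [mergeCell]

lemma VisibleAcross.ccwDist_pos_lt {x : ZMod m} (hx : VisibleAcross m D e f x) :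
    0 < ccwDist m e x ∧ ccwDist m e x < ccwDist m e f := by
  have hw := hx.1
  rw [wbtw_iff_ccwDist e] at hw
  have := ccwDist_self e
  omega

lemma exists_diag_hiding (hD : IsDissection m D) (hef : nextIn m C₀ e f) {x : ZMod m}
    (hx : x ∉ mergeCell m D e f C₀) (hxef : wbtw m e x f) :
    ∃ u v, s(u, v) ∈ D ∧ ccwDist m e u < ccwDist m e x ∧ ccwDist m e x < ccwDist m e v ∧
      ccwDist m e v ≤ ccwDist m e f ∧
      ∀ y ∈ mergeCell m D e f C₀,
        ccwDist m e y ≤ ccwDist m e u ∨ ccwDist m e v ≤ ccwDist m e y := by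
  obtain ⟨u, v, huv, hxuv, heuv, hfuv⟩ :
      ∃ u v, s(u, v) ∈ D ∧ wbtw m u x v ∧ ¬ wbtw m u e v ∧ ¬ wbtw m u f v := by
    by_contra! h
    exact hx (mem_mergeCell.2 (.inr
      ⟨hxef, fun u v huv ⟨h₁, h₂, h₃⟩ => h₃ (h u v huv h₁ h₂)⟩))
  have hvis : ∀ y, VisibleAcross m D e f y → ¬ wbtw m u y v :=
    fun y hy h => hy.2 u v huv ⟨h, heuv, hfuv⟩
  have := (ccwDist_ne_ccwDist e).2 (hD.1 _ huv u v rfl).1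
  have := ccwDist_self e
  have := ccwDist_lt e u
  have := ccwDist_lt e f
  rw [wbtw_iff_ccwDist e] at hxuv heuv hfuv hxef
  refine ⟨u, v, huv, by omega, by omega, by omega, fun y hy => ?_⟩
  rcases mem_mergeCell.1 hy with hy | hy
  · have := ccwDist_of_nextIn hef hy
    omega
  · have := hvis y hy
    rw [wbtw_iff_ccwDist e] at this
    omega

/-- Starting from `w = a + 1`, a diagonal of `D` hiding `w` must start at `a`, since it cannot
cross the previous link `s(a, w)`; its other end is a later `w`, until `w = b`. -/
lemma mem_of_nextIn_mergeCell (hD : IsDissection m D) (hef : nextIn m C₀ e f) {a b : ZMod m}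
    (hab : nextIn m (mergeCell m D e f C₀) a b) (hlt : ccwDist m e a < ccwDist m e b)
    (hle : ccwDist m e b ≤ ccwDist m e f) (hb : b ≠ a + 1) : s(a, b) ∈ D := by
  have := ccwDist_self e
  have key : ∀ k w, ccwDist m e b - ccwDist m e w = k → ccwDist m e a < ccwDist m e w →
      ccwDist m e w ≤ ccwDist m e b → (w = a + 1 ∨ s(a, w) ∈ D) → s(a, b) ∈ D := by
    intro k
    induction k using Nat.strong_induction_on with
    | _ k ih =>
      intro w hk haw hwb hlink
      rcases eq_or_lt_of_le hwb with hwb | hwb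
      · obtain rfl := (ccwDist_inj e).1 hwb
        exact hlink.resolve_left hb
      have hwM : w ∉ mergeCell m D e f C₀ := fun hw =>
        hab.2.2.2 w hw ((wbtw_iff_ccwDist e a w b).2 (by omega))
      obtain ⟨u, v, huv, hu, hv, hvf, hM⟩ :=
        exists_diag_hiding hD hef hwM ((wbtw_iff_ccwDist e e w f).2 (by omega))
      have ha := hM a hab.1
      have hb' := hM b hab.2.1
      have hua : u = a := by
        refine (ccwDist_inj e).1 (le_antisymm ?_ (by omega))
        by_contra! hau
        rcases hlink with rfl | haw
        · have := ccwDist_add_one e a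
          omega
        · exact hD.2 _ haw _ huv (cross_of_ccwDist_lt e hau hu hv)
      subst hua
      exact ih _ (by omega) v rfl (by omega) (by omega) (.inr huv)
  have := ccwDist_add_one e a
  have := ccwDist_lt e b
  exact key _ (a + 1) rfl (by omega) (by omega) (.inl rfl)

lemma nextIn_mergeCell_of_nextIn (hef : nextIn m C₀ e f) {a b : ZMod m} (hab : nextIn m C₀ a b)
    (hne : ¬ (a = e ∧ b = f)) : nextIn m (mergeCell m D e f C₀) a b := by
  refine ⟨mem_mergeCell.2 (.inl hab.1), mem_mergeCell.2 (.inl hab.2.1), hab.2.2.1,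
    fun x hx hw => ?_⟩
  rcases mem_mergeCell.1 hx with hx | hx
  · exact hab.2.2.2 x hx hw
  have := hx.ccwDist_pos_lt
  have := ccwDist_of_nextIn hef hab.1
  have := ccwDist_of_nextIn hef hab.2.1
  have he := hab.2.2.2 e hef.1
  have hf := hab.2.2.2 f hef.2.1
  have := (ccwDist_ne_ccwDist e).2 hab.2.2.1
  have : ¬ (ccwDist m e a = ccwDist m e e ∧ ccwDist m e b = ccwDist m e f) := by
    simpa only [ccwDist_inj] using hne
  have := ccwDist_self e
  rw [wbtw_iff_ccwDist e] at hw he hf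
  omega

lemma nextIn_mergeCell_of_mem (hef : nextIn m C₀ e f) {a b : ZMod m} (hab : s(a, b) ∈ D)
    (ha : a ∈ mergeCell m D e f C₀) (hb : b ∈ mergeCell m D e f C₀)
    (hlt : ccwDist m e a < ccwDist m e b) (hle : ccwDist m e b ≤ ccwDist m e f) :
    nextIn m (mergeCell m D e f C₀) a b := by
  refine ⟨ha, hb, (ccwDist_ne_ccwDist e).1 (by omega), fun x hx hw => ?_⟩
  have := ccwDist_self e
  rcases mem_mergeCell.1 hx with hx | hx
  · have := ccwDist_of_nextIn hef hx
    rw [wbtw_iff_ccwDist e] at hw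
    omega
  · refine hx.2 a b hab ⟨hw, ?_, ?_⟩ <;> rw [wbtw_iff_ccwDist e] <;> omega

lemma nextIn_of_nextIn_mergeCell (hef : nextIn m C₀ e f) {a b : ZMod m}
    (hab : nextIn m (mergeCell m D e f C₀) a b)
    (hout : ¬ (ccwDist m e a < ccwDist m e b ∧ ccwDist m e b ≤ ccwDist m e f)) :
    nextIn m C₀ a b := by
  have he := hab.2.2.2 e (mem_mergeCell.2 (.inl hef.1))
  have hf := hab.2.2.2 f (mem_mergeCell.2 (.inl hef.2.1))
  have := (ccwDist_ne_ccwDist e).2 hab.2.2.1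
  have := ccwDist_self e
  have := ccwDist_lt e f
  rw [wbtw_iff_ccwDist e] at he hf
  have ha : a ∈ C₀ := by
    rcases mem_mergeCell.1 hab.1 with h | h
    · exact h
    · have := h.ccwDist_pos_lt
      omega
  have hb : b ∈ C₀ := by
    rcases mem_mergeCell.1 hab.2.1 with h | h
    · exact h
    · have := h.ccwDist_pos_lt
      have := ccwDist_of_nextIn hef ha
      omega
  exact ⟨ha, hb, hab.2.2.1, fun x hx => hab.2.2.2 x (mem_mergeCell.2 (.inl hx))⟩

lemma ccwDist_le_of_visibleAcross (hD : IsDissection m (insert s(e, f) D)) {x y : ZMod m}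
    (hxy : s(x, y) ∈ D) (hx : VisibleAcross m D e f x) : ccwDist m e y ≤ ccwDist m e f := by
  by_contra! hy
  have hx' := hx.ccwDist_pos_lt
  have := ccwDist_self e
  exact hD.2 _ (Finset.mem_insert_self _ _) _ (Finset.mem_insert_of_mem hxy)
    (cross_of_ccwDist_lt e (by omega) hx'.2 hy)

lemma mergeCell_adj (hD : IsDissection m (insert s(e, f) D))
    (hC₀ : IsCell m (insert s(e, f) D) C₀) (hef : nextIn m C₀ e f) {a b : ZMod m}
    (hab : nextIn m (mergeCell m D e f C₀) a b) :
    b = a + 1 ∨ s(a, b) ∈ D := by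
  refine or_iff_not_imp_left.2 fun hb => ?_
  by_cases hin : ccwDist m e a < ccwDist m e b ∧ ccwDist m e b ≤ ccwDist m e f
  · exact mem_of_nextIn_mergeCell (hD.subset (Finset.subset_insert _ _)) hef hab hin.1 hin.2 hb
  have hab₀ := nextIn_of_nextIn_mergeCell hef hab hin
  rcases Finset.mem_insert.1 ((hC₀.2.1 a b hab₀).resolve_left hb) with h | h
  · exfalso
    have := (ccwDist_ne_ccwDist e).2 hab.2.2.1
    have := ccwDist_self e
    rcases Sym2.eq_iff.1 h with ⟨rfl, rfl⟩ | ⟨rfl, rfl⟩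
    · exact hin ⟨by omega, le_rfl⟩
    · exact nextIn_asymm hC₀.1 hef hab₀
  · exact h

lemma mergeCell_diag (hD : IsDissection m (insert s(e, f) D))
    (hC₀ : IsCell m (insert s(e, f) D) C₀) (hef : nextIn m C₀ e f) (hδ : s(e, f) ∉ D)
    {a b : ZMod m} (hab : s(a, b) ∈ D) (ha : a ∈ mergeCell m D e f C₀)
    (hb : b ∈ mergeCell m D e f C₀) :
    nextIn m (mergeCell m D e f C₀) a b ∨ nextIn m (mergeCell m D e f C₀) b a := by
  by_cases h₀ : a ∈ C₀ ∧ b ∈ C₀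
  · have hne : ∀ x y, s(x, y) = s(a, b) → ¬ (x = e ∧ y = f) := by
      rintro x y hxy ⟨rfl, rfl⟩
      exact hδ (hxy ▸ hab)
    exact (hC₀.2.2 _ (Finset.mem_insert_of_mem hab) a b rfl h₀.1 h₀.2).imp
      (fun h => nextIn_mergeCell_of_nextIn hef h (hne a b rfl))
      (fun h => nextIn_mergeCell_of_nextIn hef h (hne b a Sym2.eq_swap))
  have hba : s(b, a) ∈ D := Sym2.eq_swap (a := a) ▸ hab
  have hle : ccwDist m e a ≤ ccwDist m e f ∧ ccwDist m e b ≤ ccwDist m e f := by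
    rcases mem_mergeCell.1 ha with ha' | ha'
    · rcases mem_mergeCell.1 hb with hb' | hb'
      · exact absurd ⟨ha', hb'⟩ h₀
      · exact ⟨ccwDist_le_of_visibleAcross hD hba hb', hb'.ccwDist_pos_lt.2.le⟩
    · exact ⟨ha'.ccwDist_pos_lt.2.le, ccwDist_le_of_visibleAcross hD hab ha'⟩
  have := (ccwDist_ne_ccwDist e).2 (hD.1 _ (Finset.mem_insert_of_mem hab) a b rfl).1
  rcases Nat.lt_or_gt_of_ne this with h | h
  · exact .inl (nextIn_mergeCell_of_mem hef hab ha hb h hle.2)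
  · exact .inr (nextIn_mergeCell_of_mem hef hba hb ha h hle.1)

lemma mergeCell_isCell (hD : IsDissection m (insert s(e, f) D))
    (hC₀ : IsCell m (insert s(e, f) D) C₀) (hef : nextIn m C₀ e f) (hδ : s(e, f) ∉ D) :
    IsCell m D (mergeCell m D e f C₀) :=
  ⟨hC₀.1.trans (Finset.card_le_card Finset.subset_union_left),
    fun _ _ => mergeCell_adj hD hC₀ hef,
    fun _ hp _ _ hab => by subst hab; exact mergeCell_diag hD hC₀ hef hδ hp⟩

end Merge

section Refinement

variable {m : ℕ} [NeZero m]

lemma exists_isCell_superset_of_insert {D : Finset (Sym2 (ZMod m))} {δ : Sym2 (ZMod m)}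
    {C₀ : Finset (ZMod m)} (hD : IsDissection m (insert δ D))
    (hC₀ : IsCell m (insert δ D) C₀) :
    ∃ C, IsCell m D C ∧ C₀ ⊆ C := by
  by_cases hδ : δ ∈ D
  · rw [Finset.insert_eq_of_mem hδ] at hC₀
    exact ⟨C₀, hC₀, subset_rfl⟩
  by_cases hedge : ∃ e f, δ = s(e, f) ∧ nextIn m C₀ e f
  · obtain ⟨e, f, rfl, hef⟩ := hedge
    exact ⟨_, mergeCell_isCell hD hC₀ hef hδ, Finset.subset_union_left⟩
  refine ⟨C₀, ⟨hC₀.1, fun a b hab => ?_,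
    fun p hp => hC₀.2.2 p (Finset.mem_insert_of_mem hp)⟩, subset_rfl⟩
  refine (hC₀.2.1 a b hab).imp_right fun h => (Finset.mem_insert.1 h).resolve_left ?_
  exact fun h => hedge ⟨a, b, h.symm, hab⟩

lemma exists_isCell_superset {D D' : Finset (Sym2 (ZMod m))} {C₀ : Finset (ZMod m)}
    (hD' : IsDissection m D') (hDD' : D ⊆ D') (hC₀ : IsCell m D' C₀) :
    ∃ C, IsCell m D C ∧ C₀ ⊆ C := by
  suffices key : ∀ S : Finset (Sym2 (ZMod m)), ∀ C₀, IsDissection m (S ∪ D) →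
      IsCell m (S ∪ D) C₀ → ∃ C, IsCell m D C ∧ C₀ ⊆ C by
    rw [← Finset.sdiff_union_of_subset hDD'] at hD' hC₀
    exact key _ C₀ hD' hC₀
  intro S
  induction S using Finset.induction_on with
  | empty =>
    intro C₀ _ hC₀
    rw [Finset.empty_union] at hC₀
    exact ⟨C₀, hC₀, subset_rfl⟩
  | insert δ S _ ih =>
    intro C₀ hD hC₀
    rw [Finset.insert_union] at hD hC₀
    obtain ⟨C₁, hC₁, hsub₁⟩ := exists_isCell_superset_of_insert hD hC₀
    obtain ⟨C, hC, hsub⟩ := ih C₁ (hD.subset (Finset.subset_insert _ _)) hC₁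
    exact ⟨C, hC, hsub₁.trans hsub⟩

end Refinement

theorem accordion_diag_of_nested_general
    (m : ℕ) (hm : 3 ≤ m)
    (D D' : Finset (Sym2 (ZMod m)))
    (hD' : IsDissection m D') (hDD' : D ⊆ D')
    (q : Sym2 (ZMod m)) (hq : IsAccordionDiag m D q) :
    IsAccordionDiag m D' q := by
  have : NeZero m := ⟨by omega⟩
  refine ⟨hq.1, fun C₀ hC₀ => ?_⟩
  obtain ⟨C, hC, hsub⟩ := exists_isCell_superset hD' hDD' hC₀
  exact AccordionAt.mono (hq.2 C hC) hC.1 hC₀.1 hsub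

/-- **Observation** (Pilaud–Plamondon–Stella, Section 4).
For any two nested dissections `D∘ ⊆ D∘'` of the polygon `P∘`, any `D∘`-accordion diagonal
of `P•` is also a `D∘'`-accordion diagonal of `P•`. -/
theorem accordion_diag_of_nested
    (m : ℕ) (hm : 3 ≤ m)
    (D D' : Finset (Sym2 (ZMod m)))
    (hD : IsDissection m D) (hD' : IsDissection m D') (hDD' : D ⊆ D')
    (q : Sym2 (ZMod m)) (hq : IsAccordionDiag m D q) :
    IsAccordionDiag m D' q :=
  accordion_diag_of_nested_general m hm D D' hD' hDD' q hq
end
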